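/- arXiv:1911.06597 — 6 statements merged into one kernel-verified Lean document; each statement's English description precedes it below -/
import Mathlib

section
/- Let w be analytic on the open unit disk D with w(D) ⊆ D and w(0) = 0. Then the majorant series of its derivative satisfies M_{w'}(r) ≤ 1 for all 0 ≤ r ≤ 1 − √(2/3). -/
open Metric

/-- The majorant series `M_F(r) = ∑ |A_n| r^n` of an analytic function
`F(z) = ∑ A_n z^n` on the unit disk, where `A_n = F⁽ⁿ⁾(0)/n!`. -/
noncomputable def majorant (F : ℂ → ℂ) (r : ℝ) : ℝ :=
  ∑' n : ℕ, ‖iteratedDeriv n F 0 / n.factorial‖ * r ^ n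

/-- `g` is subordinate to `f` on the unit disk: `g = f ∘ φ` for some analytic
self-map `φ` of the unit disk with `φ 0 = 0`. -/
def Subordinate (g f : ℂ → ℂ) : Prop :=
  ∃ φ : ℂ → ℂ, AnalyticOnNhd ℂ φ (ball 0 1) ∧ φ 0 = 0 ∧
    Set.MapsTo φ (ball 0 1) (ball 0 1) ∧ Set.EqOn g (f ∘ φ) (ball 0 1)

/-!
Write `w z = z φ(z)` with `φ(z) = ∑ bₙ zⁿ`, so that `M_{w'}(r) = ∑ (n + 1) |bₙ| rⁿ`; by Schwarz's
lemma `|φ| ≤ 1`. For `n ≥ 1` Wiener's inequality `|bₙ| ≤ 1 - |b₀|²` is the Schwarz–Pick bound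
`|H'(0)| ≤ 1 - |H(0)|²` for `H(z) = ∑ b_{nm} zᵐ`: `H(yⁿ)` is the mean of `φ(ωʲ y)` over the
`n`-th roots of unity `ωʲ`, so `|H| ≤ 1`. With `t = |b₀|` and `(1 - r)² ≥ 2/3` this gives
`M_{w'}(r) ≤ t + (1 - t²)((1 - r)⁻² - 1) ≤ t + (1 - t²)/2 ≤ 1`.
-/

open Complex ComplexConjugate Filter Set Topology
open scoped NNReal

noncomputable def moebius (c z : ℂ) : ℂ := (z - c) / (1 - conj c * z)

theorem one_sub_conj_mul_ne_zero {c z : ℂ} (hc : ‖c‖ < 1) (hz : ‖z‖ ≤ 1) :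
    1 - conj c * z ≠ 0 := by
  intro h
  have : ‖conj c * z‖ < 1 := by
    rw [norm_mul, norm_conj]
    nlinarith [norm_nonneg c, norm_nonneg z]
  rw [← sub_eq_zero.1 h, norm_one] at this
  exact this.false

theorem sq_norm_one_sub_conj_mul_sub_sq_norm_sub (c z : ℂ) :
    ‖1 - conj c * z‖ ^ 2 - ‖z - c‖ ^ 2 = (1 - ‖c‖ ^ 2) * (1 - ‖z‖ ^ 2) := by
  simp only [Complex.sq_norm, normSq_apply, sub_re, sub_im, mul_re, mul_im, one_re, one_im,
    conj_re, conj_im]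
  ring

theorem norm_moebius_le_one {c z : ℂ} (hc : ‖c‖ < 1) (hz : ‖z‖ ≤ 1) : ‖moebius c z‖ ≤ 1 := by
  have key : ‖z - c‖ ≤ ‖1 - conj c * z‖ := by
    have hc2 : ‖c‖ ^ 2 ≤ 1 := pow_le_one₀ (norm_nonneg c) hc.le
    have hz2 : ‖z‖ ^ 2 ≤ 1 := pow_le_one₀ (norm_nonneg z) hz
    refine (pow_le_pow_iff_left₀ (norm_nonneg _) (norm_nonneg _) two_ne_zero).1 ?_
    nlinarith [sq_norm_one_sub_conj_mul_sub_sq_norm_sub c z,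
      mul_nonneg (sub_nonneg.2 hc2) (sub_nonneg.2 hz2)]
  rw [moebius, norm_div]
  exact div_le_one_of_le₀ key (norm_nonneg _)

theorem hasDerivAt_moebius_self {c : ℂ} (hc : ‖c‖ < 1) :
    HasDerivAt (moebius c) (1 - conj c * c)⁻¹ c := by
  have hne := one_sub_conj_mul_ne_zero hc hc.le
  refine (((hasDerivAt_id' c).sub_const c).div
    (((hasDerivAt_id' c).const_mul (conj c)).const_sub 1) hne).congr_deriv ?_
  field_simp
  ring

theorem differentiableOn_moebius {c : ℂ} (hc : ‖c‖ < 1) :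
    DifferentiableOn ℂ (moebius c) (closedBall 0 1) := fun _ hz =>
  ((differentiableWithinAt_id.sub_const c).div
    ((differentiableWithinAt_id.const_mul _).const_sub 1)
    (one_sub_conj_mul_ne_zero hc (mem_closedBall_zero_iff.1 hz)))

theorem norm_deriv_le_one_sub_sq_of_mapsTo_closedBall {f : ℂ → ℂ}
    (hd : DifferentiableOn ℂ f (ball 0 1)) (hf : MapsTo f (ball 0 1) (closedBall 0 1)) :
    ‖deriv f 0‖ ≤ 1 - ‖f 0‖ ^ 2 := by
  have h01 : (0 : ℂ) ∈ ball (0 : ℂ) 1 := mem_ball_self one_pos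
  rcases (mem_closedBall_zero_iff.1 (hf h01)).lt_or_eq with hc | hc
  · set c := f 0
    have hG : MapsTo (moebius c ∘ f) (ball 0 1) (closedBall (moebius c (f 0)) 1) := by
      intro z hz
      simp only [moebius, c, sub_self, zero_div, Function.comp_apply, mem_closedBall_zero_iff]
      exact norm_moebius_le_one hc (mem_closedBall_zero_iff.1 (hf hz))
    have hGd : DifferentiableOn ℂ (moebius c ∘ f) (ball 0 1) :=
      (differentiableOn_moebius hc).comp hd hf
    have hSchwarz := norm_deriv_le_one_of_mapsTo_ball hGd hG one_pos
    have hfd : HasDerivAt f (deriv f 0) 0 :=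
      (hd.differentiableAt (isOpen_ball.mem_nhds h01)).hasDerivAt
    have hpos : 0 < 1 - ‖c‖ ^ 2 := by nlinarith [norm_nonneg c]
    have hnorm : ‖1 - conj c * c‖ = 1 - ‖c‖ ^ 2 := by
      rw [Complex.conj_mul', ← ofReal_pow, ← ofReal_one, ← ofReal_sub, norm_real,
        Real.norm_of_nonneg hpos.le]
    rw [((hasDerivAt_moebius_self hc).comp 0 hfd).deriv, norm_mul, norm_inv, hnorm,
      inv_mul_le_iff₀ hpos, mul_one] at hSchwarz
    exact hSchwarz
  · have hmax : IsMaxOn (norm ∘ f) (ball 0 1) 0 := fun z hz => by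
      simpa [hc] using mem_closedBall_zero_iff.1 (hf hz)
    have hconst : f =ᶠ[𝓝 0] fun _ => f 0 := eventuallyEq_of_mem (isOpen_ball.mem_nhds h01)
      (eqOn_of_isPreconnected_of_isMaxOn_norm (convex_ball (0 : ℂ) 1).isPreconnected
        isOpen_ball hd h01 hmax)
    simp [hconst.deriv_eq, hc]

noncomputable def taylorCoeff (f : ℂ → ℂ) (n : ℕ) : ℂ := iteratedDeriv n f 0 / n.factorial

theorem hasSum_taylorCoeff_mul_pow {f : ℂ → ℂ} {R : ℝ} (hf : DifferentiableOn ℂ f (ball 0 R))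
    {z : ℂ} (hz : z ∈ ball 0 R) : HasSum (fun n => taylorCoeff f n * z ^ n) (f z) := by
  have h := Complex.hasSum_taylorSeries_on_ball hf hz
  simp only [sub_zero, smul_eq_mul] at h
  refine h.congr_fun fun n => ?_
  rw [taylorCoeff, div_eq_inv_mul]
  ring

theorem hasSum_taylorCoeff_succ_mul_pow_dslope {f : ℂ → ℂ} {R : ℝ}
    (hf : DifferentiableOn ℂ f (ball 0 R)) {z : ℂ} (hz : z ∈ ball 0 R) :
    HasSum (fun n => taylorCoeff f (n + 1) * z ^ n) (dslope f 0 z) := by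
  rcases eq_or_ne z 0 with rfl | hz0
  · convert hasSum_single (f := fun n => taylorCoeff f (n + 1) * (0 : ℂ) ^ n) 0
      fun n hn => by simp [hn]
    simp [taylorCoeff]
  · have hsum := ((hasSum_nat_add_iff' 1).2 (hasSum_taylorCoeff_mul_pow hf hz)).mul_left z⁻¹
    have hf0 : ∑ k ∈ Finset.range 1, taylorCoeff f k * z ^ k = f 0 := by simp [taylorCoeff]
    rw [hf0] at hsum
    rw [dslope_of_ne _ hz0, slope_def_field, sub_zero, div_eq_inv_mul]
    refine hsum.congr_fun fun n => ?_
    field_simp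
    ring

theorem taylorCoeff_deriv (f : ℂ → ℂ) (n : ℕ) :
    taylorCoeff (deriv f) n = (n + 1) * taylorCoeff f (n + 1) := by
  rw [taylorCoeff, taylorCoeff, ← iteratedDeriv_succ', Nat.factorial_succ]
  push_cast
  field_simp

theorem majorant_deriv (f : ℂ → ℂ) (r : ℝ) :
    majorant (deriv f) r = ∑' n : ℕ, (n + 1) * ‖taylorCoeff f (n + 1)‖ * r ^ n := by
  refine tsum_congr fun n => ?_
  rw [← taylorCoeff, taylorCoeff_deriv, norm_mul]
  norm_cast

theorem IsPrimitiveRoot.geom_sum_pow_eq_ite {K : Type*} [Field K] {ω : K} {n : ℕ}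
    (hω : IsPrimitiveRoot ω n) (k : ℕ) :
    ∑ j ∈ Finset.range n, (ω ^ k) ^ j = if n ∣ k then (n : K) else 0 := by
  split_ifs with hk
  · simp [(hω.pow_eq_one_iff_dvd k).2 hk]
  · have hne : ω ^ k ≠ 1 := mt (hω.pow_eq_one_iff_dvd k).1 hk
    rw [geom_sum_eq hne, ← pow_mul, mul_comm, pow_mul, hω.pow_eq_one, one_pow, sub_self,
      zero_div]

theorem IsPrimitiveRoot.hasSum_mul_comp_mul {K : Type*} [Field K] [TopologicalSpace K]
    [ContinuousAdd K] {ω : K} {n : ℕ} (hω : IsPrimitiveRoot ω n) (hn : n ≠ 0) {c s : ℕ → K}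
    (hs : ∀ j ∈ Finset.range n, HasSum (fun k => (ω ^ j) ^ k * c k) (s j)) :
    HasSum (fun m => n * c (n * m)) (∑ j ∈ Finset.range n, s j) := by
  have hfiltered : HasSum (fun k => if n ∣ k then n * c k else 0)
      (∑ j ∈ Finset.range n, s j) := by
    refine (hasSum_sum hs).congr_fun fun k => ?_
    simp_rw [← pow_mul, mul_comm _ k, pow_mul, ← Finset.sum_mul, hω.geom_sum_pow_eq_ite k,
      ite_mul, zero_mul]
  have hinj : Function.Injective (n * ·) := fun _ _ => Nat.eq_of_mul_eq_mul_left (by omega)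
  refine ((hinj.hasSum_iff fun k hk => if_neg fun ⟨m, hm⟩ => hk ⟨m, hm.symm⟩).2
    hfiltered).congr_fun fun m => ?_
  simp

theorem hasFPowerSeriesOnBall_ofScalars_of_hasSum {f : ℂ → ℂ} {c : ℕ → ℂ} {R : ℝ≥0}
    (hR : 0 < R) (hf : ∀ z ∈ ball (0 : ℂ) R, HasSum (fun n => c n * z ^ n) (f z)) :
    HasFPowerSeriesOnBall f (FormalMultilinearSeries.ofScalars ℂ c) 0 R where
  r_le := by
    refine ENNReal.le_of_forall_nnreal_lt fun r hr => ?_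
    refine (FormalMultilinearSeries.ofScalars ℂ c).le_radius_of_tendsto (l := 0) ?_
    have hr' : ((r : ℝ) : ℂ) ∈ ball (0 : ℂ) R := by simpa using hr
    simpa [FormalMultilinearSeries.norm_apply_eq_norm_coef] using
      ((hf _ hr').summable.tendsto_atTop_zero).norm
  r_pos := by simpa using hR
  hasSum {y} hy := by
    rw [Metric.eball_coe, mem_ball] at hy
    simpa [FormalMultilinearSeries.ofScalars_apply_eq, mul_comm] using hf y hy

theorem exists_hasSum_comp_mul_mul_pow_norm_le_one {φ : ℂ → ℂ} {b : ℕ → ℂ}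
    (hφ : ∀ z ∈ ball (0 : ℂ) 1, HasSum (fun k => b k * z ^ k) (φ z))
    (hmap : MapsTo φ (ball 0 1) (closedBall 0 1)) {n : ℕ} (hn : n ≠ 0) {z : ℂ}
    (hz : z ∈ ball (0 : ℂ) 1) :
    ∃ h : ℂ, HasSum (fun m => b (n * m) * z ^ m) h ∧ ‖h‖ ≤ 1 := by
  have hω := Complex.isPrimitiveRoot_exp n hn
  set ω := Complex.exp (2 * Real.pi * Complex.I / n)
  obtain ⟨y, rfl⟩ := IsAlgClosed.exists_pow_nat_eq z (Nat.pos_of_ne_zero hn)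
  have hy : ‖y‖ < 1 := by
    rw [mem_ball_zero_iff, norm_pow] at hz
    exact (pow_lt_one_iff_of_nonneg (norm_nonneg y) hn).1 hz
  have hrot : ∀ j : ℕ, ω ^ j * y ∈ ball (0 : ℂ) 1 := fun j => by
    rwa [mem_ball_zero_iff, norm_mul, norm_pow, hω.norm'_eq_one hn, one_pow, one_mul]
  have havg := hω.hasSum_mul_comp_mul hn (c := fun k => b k * y ^ k)
    (s := fun j => φ (ω ^ j * y)) fun j _ => (hφ _ (hrot j)).congr_fun fun k => by ring
  refine ⟨(n : ℂ)⁻¹ * ∑ j ∈ Finset.range n, φ (ω ^ j * y),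
    (havg.mul_left (n : ℂ)⁻¹).congr_fun fun m => ?_, ?_⟩
  · field_simp
    ring
  · calc ‖(n : ℂ)⁻¹ * ∑ j ∈ Finset.range n, φ (ω ^ j * y)‖
        ≤ (n : ℝ)⁻¹ * ∑ j ∈ Finset.range n, ‖φ (ω ^ j * y)‖ := by
          rw [norm_mul, norm_inv, Complex.norm_natCast]
          gcongr
          exact norm_sum_le _ _
      _ ≤ (n : ℝ)⁻¹ * ∑ j ∈ Finset.range n, 1 := by
          gcongr with j
          exact mem_closedBall_zero_iff.1 (hmap (hrot j))
      _ = 1 := by simp [hn]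

theorem norm_coeff_le_one_sub_sq_norm_coeff_zero {φ : ℂ → ℂ} {b : ℕ → ℂ}
    (hφ : ∀ z ∈ ball (0 : ℂ) 1, HasSum (fun k => b k * z ^ k) (φ z))
    (hmap : MapsTo φ (ball 0 1) (closedBall 0 1)) {n : ℕ} (hn : n ≠ 0) :
    ‖b n‖ ≤ 1 - ‖b 0‖ ^ 2 := by
  set H : ℂ → ℂ := fun z => ∑' m, b (n * m) * z ^ m
  have hH : ∀ z ∈ ball (0 : ℂ) 1, HasSum (fun m => b (n * m) * z ^ m) (H z) ∧ ‖H z‖ ≤ 1 := by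
    intro z hz
    obtain ⟨h, hsum, hle⟩ := exists_hasSum_comp_mul_mul_pow_norm_le_one hφ hmap hn hz
    exact ⟨hsum.summable.hasSum, by rwa [← hsum.tsum_eq] at hle⟩
  have hfps := hasFPowerSeriesOnBall_ofScalars_of_hasSum one_pos fun z hz => (hH z hz).1
  have hpick := norm_deriv_le_one_sub_sq_of_mapsTo_closedBall
    (by simpa only [Metric.eball_coe, NNReal.coe_one] using hfps.differentiableOn)
    fun z hz => mem_closedBall_zero_iff.2 (hH z hz).2
  have hH0 : H 0 = b 0 := by simpa using (hfps.coeff_zero fun _ => 1).symm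
  have hH' : deriv H 0 = b n := by
    simpa [FormalMultilinearSeries.ofScalars_apply_eq] using hfps.hasFPowerSeriesAt.deriv
  rwa [hH0, hH'] at hpick

theorem tsum_succ_mul_mul_pow_le_one {u : ℕ → ℝ} (hu : ∀ n, 0 ≤ u n)
    (hu_le : ∀ n ≠ 0, u n ≤ 1 - u 0 ^ 2) {r : ℝ} (hr0 : 0 ≤ r) (hr : r ≤ 1 - √(2 / 3)) :
    ∑' n : ℕ, (n + 1) * u n * r ^ n ≤ 1 := by
  set t := u 0
  have ht : 0 ≤ 1 - t ^ 2 := (hu 1).trans (hu_le 1 one_ne_zero)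
  have hr1 : r < 1 := by linarith [Real.sqrt_pos.2 (by norm_num : (0 : ℝ) < 2 / 3)]
  have hgeom : HasSum (fun n : ℕ => (n + 1) * r ^ n) (1 / (1 - r) ^ 2) := by
    simpa using hasSum_choose_mul_geometric_of_norm_lt_one 1
      (by rwa [Real.norm_of_nonneg hr0] : ‖r‖ < 1)
  have hbound : HasSum
      (fun n : ℕ => (1 - t ^ 2) * ((n + 1) * r ^ n) + if n = 0 then t - (1 - t ^ 2) else 0)
      ((1 - t ^ 2) * (1 / (1 - r) ^ 2) + (t - (1 - t ^ 2))) :=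
    (hgeom.mul_left _).add (hasSum_ite_eq 0 _)
  have hle : ∀ n : ℕ, (n + 1) * u n * r ^ n ≤
      (1 - t ^ 2) * ((n + 1) * r ^ n) + if n = 0 then t - (1 - t ^ 2) else 0 := by
    intro n
    rcases eq_or_ne n 0 with rfl | hn
    · simp [t]
    · rw [if_neg hn, add_zero, mul_left_comm, mul_assoc]
      gcongr
      exact hu_le n hn
  have hsum : Summable fun n : ℕ => (n + 1) * u n * r ^ n :=
    hbound.summable.of_nonneg_of_le (fun n => by have := hu n; positivity) hle
  have h32 : 1 / (1 - r) ^ 2 ≤ 3 / 2 := by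
    rw [div_le_iff₀ (by nlinarith), ← sub_nonneg]
    nlinarith [Real.sq_sqrt (by norm_num : (0 : ℝ) ≤ 2 / 3), Real.sqrt_nonneg (2 / 3)]
  calc ∑' n : ℕ, (n + 1) * u n * r ^ n
      ≤ (1 - t ^ 2) * (1 / (1 - r) ^ 2) + (t - (1 - t ^ 2)) := hasSum_le hle hsum.hasSum hbound
    _ ≤ (1 - t ^ 2) * (3 / 2) + (t - (1 - t ^ 2)) := by gcongr
    _ ≤ 1 := by nlinarith [sq_nonneg (1 - t)]

/-- Bohr inequality for the derivative of an analytic self-map of the unit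
disk fixing the origin: `M_{w'}(r) ≤ 1` for `0 ≤ r ≤ 1 - √(2/3)`. -/
theorem bohr_deriv_selfmap_fixing_origin (w : ℂ → ℂ)
    (hw : AnalyticOnNhd ℂ w (ball 0 1))
    (hmap : Set.MapsTo w (ball 0 1) (ball 0 1))
    (h0 : w 0 = 0) :
    ∀ r : ℝ, 0 ≤ r → r ≤ 1 - Real.sqrt (2 / 3) →
      majorant (deriv w) r ≤ 1 := by
  intro r hr0 hr
  have hwd := hw.differentiableOn
  have hslope : MapsTo (dslope w 0) (ball 0 1) (closedBall 0 1) := fun z hz => by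
    simpa using Complex.norm_dslope_le_div_of_mapsTo_ball hwd
      (by rw [h0]; exact hmap.mono_right ball_subset_closedBall) hz
  rw [majorant_deriv]
  exact tsum_succ_mul_mul_pow_le_one (fun n => norm_nonneg _)
    (fun n hn => norm_coeff_le_one_sub_sq_norm_coeff_zero (n := n)
      (fun z hz => hasSum_taylorCoeff_succ_mul_pow_dslope hwd hz) hslope hn) hr0 hr
end

section
/- The radius 1 − √(2/3) cannot be improved in the derivative comparison theorem: for every r with 1 − √(2/3) < r < 1 there exist analytic functions f, g on the open unit disk D such that g is subordinate to f, |g(z)| ≤ |f(z)| for all z ∈ D, f(0) = 0, and M_{g'}(r) > M_{f'}(r). (One may take f(z) = z and g(z) = ξ_a(z) := z(z−a)/(1−az) with a ∈ [0,1) close to 1.) -/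
open Metric

/-!
Take `f = z` and `g = ξ_a`, `ξ_a(z) = z (z - a) / (1 - a z)`. For real `|a| ≤ 1` one has
`|1 - a z|² - |z - a|² = (1 - a²)(1 - |z|²) ≥ 0` on the disk, so `|ξ_a(z)| ≤ |z|`; hence `ξ_a` is an
analytic self-map of the disk fixing `0`, and `ξ_a ≺ z`. Expanding
`ξ_a(z) = -a z + (1 - a²) ∑ aⁿ zⁿ⁺²` gives `M_{ξ_a'}(r) = a + (1 - a²) r (2 - a r) / (1 - a r)²`,
which exceeds `M_{z'}(r) = 1` iff `(1 - a r)² < (1 + a) r (2 - a r)`. At `a = 1` the gap is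
`2 r (2 - r) - (1 - r)² = 2 - 3 (1 - r)²`, positive exactly when `r > 1 - √(2/3)`, so the strict
inequality persists for `a < 1` close to `1`.
-/

open FormalMultilinearSeries

lemma HasFPowerSeriesAt.iteratedDeriv_div_factorial {F : ℂ → ℂ} {c : ℕ → ℂ}
    (hF : HasFPowerSeriesAt F (ofScalars ℂ c) 0) (n : ℕ) :
    iteratedDeriv n F 0 / n.factorial = c n := by
  have := ofScalars_series_injective ℂ ℂ
    (hF.analyticAt.hasFPowerSeriesAt.eq_formalMultilinearSeries hF)
  exact congrFun this n

lemma majorant_deriv_eq_tsum {F : ℂ → ℂ} {c : ℕ → ℂ}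
    (hF : HasFPowerSeriesAt F (ofScalars ℂ c) 0) (r : ℝ) :
    majorant (deriv F) r = ∑' n : ℕ, (n + 1) * ‖c (n + 1)‖ * r ^ n := by
  refine tsum_congr fun n => ?_
  have hcoeff : iteratedDeriv n (deriv F) 0 / n.factorial = (n + 1) * c (n + 1) := by
    rw [← iteratedDeriv_succ', ← hF.iteratedDeriv_div_factorial,
      Nat.factorial_succ]
    push_cast
    field_simp
  rw [hcoeff, norm_mul, ← Nat.cast_add_one, Complex.norm_natCast]
  push_cast
  ring

lemma majorant_const (c : ℂ) (r : ℝ) : majorant (fun _ => c) r = ‖c‖ := by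
  rw [majorant, tsum_eq_single 0 fun n hn => by simp [iteratedDeriv_const, hn]]
  simp

lemma majorant_deriv_id (r : ℝ) : majorant (deriv id) r = 1 := by
  simp [majorant_const]

lemma subordinate_id {g : ℂ → ℂ} (hg : AnalyticOnNhd ℂ g (ball 0 1)) (hg0 : g 0 = 0)
    (hmaps : Set.MapsTo g (ball 0 1) (ball 0 1)) : Subordinate g id :=
  ⟨g, hg, hg0, hmaps, fun _ _ => rfl⟩

lemma norm_sub_le_norm_one_sub_mul {a : ℝ} {z : ℂ} (ha : |a| ≤ 1) (hz : ‖z‖ ≤ 1) :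
    ‖z - a‖ ≤ ‖1 - a * z‖ := by
  have hdiff : ‖1 - a * z‖ ^ 2 - ‖z - a‖ ^ 2 = (1 - a ^ 2) * (1 - ‖z‖ ^ 2) := by
    simp only [Complex.sq_norm, Complex.normSq_apply, Complex.sub_re, Complex.one_re,
      Complex.mul_re, Complex.ofReal_re, Complex.ofReal_im, Complex.sub_im, Complex.one_im,
      Complex.mul_im]
    ring
  have ha2 : a ^ 2 ≤ 1 := by nlinarith [sq_abs a, abs_nonneg a]
  have hz2 : ‖z‖ ^ 2 ≤ 1 := by nlinarith [norm_nonneg z]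
  have := mul_nonneg (sub_nonneg.2 ha2) (sub_nonneg.2 hz2)
  exact (sq_le_sq₀ (norm_nonneg _) (norm_nonneg _)).1 (by linarith)

noncomputable def xi (a : ℝ) (z : ℂ) : ℂ := z * (z - a) / (1 - a * z)

lemma norm_xi_le {a : ℝ} {z : ℂ} (ha : |a| ≤ 1) (hz : ‖z‖ ≤ 1) : ‖xi a z‖ ≤ ‖z‖ := by
  rw [xi, norm_div, norm_mul]
  exact div_le_of_le_mul₀ (norm_nonneg _) (norm_nonneg _)
    (mul_le_mul_of_nonneg_left (norm_sub_le_norm_one_sub_mul ha hz) (norm_nonneg z))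

noncomputable def xiCoeff (a : ℝ) : ℕ → ℂ
  | 0 => 0
  | 1 => -a
  | n + 2 => (1 - a ^ 2) * a ^ n

lemma norm_xiCoeff_one {a : ℝ} (ha : 0 ≤ a) : ‖xiCoeff a 1‖ = a := by
  simp [xiCoeff, abs_of_nonneg ha]

lemma norm_xiCoeff_add_two {a : ℝ} (ha : |a| ≤ 1) (n : ℕ) :
    ‖xiCoeff a (n + 2)‖ = (1 - a ^ 2) * |a| ^ n := by
  have ha2 : 0 ≤ 1 - a ^ 2 := by nlinarith [sq_abs a, abs_nonneg a]
  rw [xiCoeff, ← Complex.ofReal_one, ← Complex.ofReal_pow, ← Complex.ofReal_sub,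
    norm_mul, norm_pow, Complex.norm_real, Complex.norm_real, Real.norm_of_nonneg ha2,
    Real.norm_eq_abs]

lemma norm_xiCoeff_le_one {a : ℝ} (ha : |a| ≤ 1) (n : ℕ) : ‖xiCoeff a n‖ ≤ 1 := by
  match n with
  | 0 => simp [xiCoeff]
  | 1 => simpa [xiCoeff] using ha
  | n + 2 =>
    rw [norm_xiCoeff_add_two ha]
    have : |a| ^ n ≤ 1 := pow_le_one₀ (abs_nonneg a) ha
    nlinarith [pow_nonneg (abs_nonneg a) n, sq_nonneg a]

lemma hasSum_xiCoeff_mul_pow {a : ℝ} {z : ℂ} (h : ‖(a : ℂ) * z‖ < 1) :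
    HasSum (fun n => xiCoeff a n * z ^ n) (xi a z) := by
  have hne : (1 : ℂ) - a * z ≠ 0 := fun h0 => by
    rw [← sub_eq_zero.1 h0, norm_one] at h
    exact lt_irrefl 1 h
  have htail : HasSum (fun n => xiCoeff a (n + 2) * z ^ (n + 2))
      ((1 - (a : ℂ) ^ 2) * z ^ 2 * (1 - a * z)⁻¹) := by
    refine ((hasSum_geometric_of_norm_lt_one h).mul_left _).congr_fun fun n => ?_
    simp only [xiCoeff]
    ring
  have hhead : xi a z - ∑ n ∈ Finset.range 2, xiCoeff a n * z ^ n
      = (1 - (a : ℂ) ^ 2) * z ^ 2 * (1 - a * z)⁻¹ := by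
    simp only [Finset.sum_range_succ, Finset.sum_range_zero, xiCoeff, xi, div_eq_mul_inv]
    linear_combination (-(a * z : ℂ)) * mul_inv_cancel₀ hne
  exact (hasSum_nat_add_iff' 2).1 (hhead ▸ htail)

lemma hasFPowerSeriesOnBall_xi {a : ℝ} (ha : |a| ≤ 1) :
    HasFPowerSeriesOnBall (xi a) (ofScalars ℂ (xiCoeff a)) 0 1 where
  r_le := by
    have : ((1 : NNReal) : ENNReal) ≤ (ofScalars ℂ (xiCoeff a)).radius :=
      le_radius_of_bound _ 1 fun n => by simpa [ofScalars_norm] using norm_xiCoeff_le_one ha n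
    simpa using this
  r_pos := zero_lt_one
  hasSum {z} hz := by
    rw [← ENNReal.coe_one, eball_coe, NNReal.coe_one, mem_ball_zero_iff] at hz
    have haz : ‖(a : ℂ) * z‖ < 1 := by
      rw [norm_mul, Complex.norm_real, Real.norm_eq_abs]
      nlinarith [abs_nonneg a, norm_nonneg z]
    simpa [ofScalars_apply_eq, mul_comm] using hasSum_xiCoeff_mul_pow haz

lemma analyticOnNhd_xi {a : ℝ} (ha : |a| ≤ 1) : AnalyticOnNhd ℂ (xi a) (ball 0 1) := by
  simpa [← ENNReal.coe_one, eball_coe] using (hasFPowerSeriesOnBall_xi ha).analyticOnNhd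

lemma majorant_deriv_xi {a r : ℝ} (ha0 : 0 ≤ a) (ha1 : a ≤ 1) (hr : |r| < 1) :
    majorant (deriv (xi a)) r = a + (1 - a ^ 2) * r * (2 - a * r) / (1 - a * r) ^ 2 := by
  have ha : |a| ≤ 1 := by rwa [abs_of_nonneg ha0]
  have har : ‖a * r‖ < 1 := by
    rw [Real.norm_eq_abs, abs_mul, abs_of_nonneg ha0]
    nlinarith [abs_nonneg r]
  have hne : 1 - a * r ≠ 0 := by
    rw [Real.norm_eq_abs] at har
    linarith [le_abs_self (a * r)]
  rw [majorant_deriv_eq_tsum (hasFPowerSeriesOnBall_xi ha).hasFPowerSeriesAt]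
  refine HasSum.tsum_eq ((hasSum_nat_add_iff' 1).1 ?_)
  -- after the linear term `-a z`, the coefficients are `(n + 2) (1 - a²) aⁿ rⁿ⁺¹`
  have htail := ((hasSum_coe_mul_geometric_of_norm_lt_one har).add
    ((hasSum_geometric_of_norm_lt_one har).mul_left 2)).mul_left ((1 - a ^ 2) * r)
  have hval : a + (1 - a ^ 2) * r * (2 - a * r) / (1 - a * r) ^ 2 -
      ∑ n ∈ Finset.range 1, ((n : ℝ) + 1) * ‖xiCoeff a (n + 1)‖ * r ^ n
      = (1 - a ^ 2) * r * (a * r / (1 - a * r) ^ 2 + 2 * (1 - a * r)⁻¹) := by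
    rw [Finset.sum_range_one, zero_add, norm_xiCoeff_one ha0]
    field_simp
    ring
  refine hval ▸ htail.congr_fun fun n => ?_
  rw [norm_xiCoeff_add_two ha, abs_of_nonneg ha0]
  push_cast
  ring

lemma three_mul_one_sub_sq_lt_two {r : ℝ} (hr : 1 - √(2 / 3) < r) (hr1 : r < 1) :
    3 * (1 - r) ^ 2 < 2 := by
  have := (Real.lt_sqrt (by linarith)).1 (by linarith : 1 - r < √(2 / 3))
  linarith

lemma exists_one_lt_majorant_deriv_xi {r : ℝ} (hr1 : r < 1) (hr : 3 * (1 - r) ^ 2 < 2) :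
    ∃ a, 0 ≤ a ∧ a < 1 ∧ 1 < majorant (deriv (xi a)) r := by
  have hr0 : 0 < r := by nlinarith
  set ε := 2 - 3 * (1 - r) ^ 2 with hε
  have hε0 : 0 < ε := by linarith
  have hε2 : ε ≤ 2 := by nlinarith
  refine ⟨1 - ε / 8, by linarith, by linarith, ?_⟩
  set a := 1 - ε / 8 with ha
  have har : 0 < 1 - a * r := by nlinarith
  -- with `t = 1 - a`, the gap is at least `ε - 4 t - 2 t²`, still positive at `t = ε / 8`
  have hgap : (1 + a) * r * (2 - a * r) - (1 - a * r) ^ 2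
      = ε + ε / 8 * (5 * r ^ 2 - 4 * r) - 2 * (ε / 8) ^ 2 * r ^ 2 := by
    rw [ha, hε]; ring
  have hkey : (1 - a * r) ^ 2 < (1 + a) * r * (2 - a * r) := by
    nlinarith [mul_nonneg hε0.le (sq_nonneg r), mul_le_mul_of_nonneg_left hr1.le hε0.le,
      mul_le_mul_of_nonneg_left hε2 hε0.le,
      mul_le_mul_of_nonneg_left (pow_le_one₀ (n := 2) hr0.le hr1.le) (sq_nonneg ε)]
  rw [majorant_deriv_xi (by linarith) (by linarith) (abs_lt.2 ⟨by linarith, hr1⟩),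
    ← sub_lt_iff_lt_add', lt_div_iff₀ (pow_pos har 2)]
  calc (1 - a) * (1 - a * r) ^ 2 < (1 - a) * ((1 + a) * r * (2 - a * r)) := by gcongr; linarith
    _ = (1 - a ^ 2) * r * (2 - a * r) := by ring

/-- The radius `1 - √(2/3)` cannot be improved in the derivative comparison
theorem. -/
theorem majorant_deriv_comparison_radius_sharp :
    ∀ r : ℝ, 1 - Real.sqrt (2 / 3) < r → r < 1 →
      ∃ f g : ℂ → ℂ, AnalyticOnNhd ℂ f (ball 0 1) ∧
        AnalyticOnNhd ℂ g (ball 0 1) ∧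
        Subordinate g f ∧
        (∀ z ∈ ball (0 : ℂ) 1, ‖g z‖ ≤ ‖f z‖) ∧
        f 0 = 0 ∧
        majorant (deriv f) r < majorant (deriv g) r := by
  intro r hr hr1
  obtain ⟨a, ha0, ha1, hlt⟩ :=
    exists_one_lt_majorant_deriv_xi hr1 (three_mul_one_sub_sq_lt_two hr hr1)
  have ha : |a| ≤ 1 := by rw [abs_of_nonneg ha0]; exact ha1.le
  have hle : ∀ z ∈ ball (0 : ℂ) 1, ‖xi a z‖ ≤ ‖z‖ := fun z hz =>
    norm_xi_le ha (mem_ball_zero_iff.1 hz).le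
  refine ⟨id, xi a, analyticOnNhd_id, analyticOnNhd_xi ha,
    subordinate_id (analyticOnNhd_xi ha) (by simp [xi]) fun z hz => ?_, hle, rfl, ?_⟩
  · exact mem_ball_zero_iff.2 ((hle z hz).trans_lt (mem_ball_zero_iff.1 hz))
  · rwa [majorant_deriv_id]
end

section
/- (Bombieri's inequality.) Let f(z) = ∑_{n=0}^∞ a_n z^n be analytic on the open unit disk D with f(D) ⊆ D. Then M_f(r) − |a_0| ≤ r(1 − |a_0|²)/(1 − |a_0| r) for all r with 0 ≤ r ≤ |a_0|. -/
open Metric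

open Complex intervalIntegral Finset


-- orthogonality
lemma my_integral_exp_int {k : ℤ} (hk : k ≠ 0) :
    (∫ θ : ℝ in (0:ℝ)..(2*Real.pi), Complex.exp (k * θ * Complex.I)) = 0 := by
  have h : (k : ℂ) * Complex.I ≠ 0 := by
    simp [Complex.I_ne_zero, Int.cast_injective.ne_iff, hk]
  have h2 := integral_exp_mul_complex (a := (0:ℝ)) (b := 2*Real.pi) h
  have h3 : ∀ θ : ℝ, (k : ℂ) * θ * Complex.I = ((k:ℂ) * Complex.I) * θ := by
    intro θ; ring
  simp only [h3]
  rw [h2]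
  have : ((k:ℂ) * Complex.I) * ((2*Real.pi : ℝ) : ℂ) = k * (2 * Real.pi * Complex.I) := by
    push_cast; ring
  rw [this, Complex.exp_int_mul_two_pi_mul_I]
  simp

lemma my_keyint (f : ℂ → ℂ) (hf : AnalyticOnNhd ℂ f (ball 0 1)) {s : ℝ}
    (hs0 : 0 < s) (hs1 : s < 1) (n : ℕ) :
    (∫ θ : ℝ in (0:ℝ)..(2*Real.pi),
        f (circleMap 0 s θ) * Complex.exp (-(n:ℂ) * θ * Complex.I))
      = 2 * (Real.pi : ℂ) * (iteratedDeriv n f 0 / (n.factorial : ℂ)) * (s:ℂ) ^ n := by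
  have hd : DifferentiableOn ℂ f (closedBall 0 s) :=
    hf.differentiableOn.mono (closedBall_subset_ball hs1)
  lift s to NNReal using hs0.le with S hS
  have H : HasFPowerSeriesOnBall f (cauchyPowerSeries f 0 S) 0 S :=
    hd.hasFPowerSeriesOnBall (by exact_mod_cast hs0)
  have hcoeff : (n.factorial : ℂ) * (cauchyPowerSeries f 0 S n fun _ => (1:ℂ))
      = iteratedDeriv n f 0 := by
    have := H.factorial_smul (y := (1:ℂ)) n
    rw [nsmul_eq_mul] at this
    rw [this, iteratedDeriv_eq_iteratedFDeriv]
  have hS0 : ((S:ℝ):ℂ) ≠ 0 := by exact_mod_cast hs0.ne'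
  have hcirc : (∮ z in C(0, (S:ℝ)), ((1:ℂ) / (z - 0)) ^ n • (z - 0)⁻¹ • f z)
      = (Complex.I * (((S:ℝ):ℂ) ^ n)⁻¹) *
        ∫ θ in (0:ℝ)..(2*Real.pi), f (circleMap 0 S θ) * Complex.exp (-(n:ℂ)*θ*Complex.I) := by
    rw [circleIntegral, ← intervalIntegral.integral_const_mul]
    apply intervalIntegral.integral_congr
    intro θ _
    simp only [deriv_circleMap, smul_eq_mul, sub_zero]
    rw [circleMap_zero]
    have he : Complex.exp (θ * Complex.I) ≠ 0 := Complex.exp_ne_zero _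
    have hexp : Complex.exp (-(n:ℂ) * θ * Complex.I) = (Complex.exp (θ*Complex.I))⁻¹ ^ n := by
      rw [← Complex.exp_neg, ← Complex.exp_nat_mul]; ring_nf
    rw [hexp]
    field_simp
    simp only [one_div, mul_inv, mul_pow]
    have hSn : (((S:ℝ):ℂ))⁻¹ ^ n * ((S:ℝ):ℂ) ^ n = 1 := by
      rw [← mul_pow, inv_mul_cancel₀ hS0, one_pow]
    linear_combination (f (((S:ℝ):ℂ) * Complex.exp (θ * Complex.I)) *
      (Complex.exp (θ * Complex.I))⁻¹ ^ n) * hSn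
  have happ := cauchyPowerSeries_apply f 0 (S:ℝ) n 1
  rw [happ, hcirc, smul_eq_mul] at hcoeff
  rw [← hcoeff]
  have hπ : (Real.pi : ℂ) ≠ 0 := by exact_mod_cast Real.pi_ne_zero
  have hfac : (n.factorial : ℂ) ≠ 0 := by exact_mod_cast n.factorial_ne_zero
  field_simp
  ring
  congr 1
  funext θ
  ring_nf


lemma my_normSq_identity (a ζ : ℂ) :
    Complex.normSq (1 - (starRingEnd ℂ) a * ζ) - Complex.normSq (ζ - a)
      = (1 - Complex.normSq a) * (1 - Complex.normSq ζ) := by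
  simp only [Complex.normSq_apply, Complex.sub_re, Complex.sub_im, Complex.mul_re, Complex.mul_im,
    Complex.one_re, Complex.one_im, Complex.conj_re, Complex.conj_im]
  ring

lemma my_normSq_lt_one {a : ℂ} (ha : ‖a‖ < 1) : Complex.normSq a < 1 := by
  rw [← Complex.sq_norm]
  have h := norm_nonneg a
  have : ‖a‖ = ‖a‖ := rfl
  nlinarith

lemma my_denom_ne (a ζ : ℂ) (ha : ‖a‖ < 1) (hζ : ‖ζ‖ < 1) :
    1 - (starRingEnd ℂ) a * ζ ≠ 0 := by
  intro h
  have h1 : (starRingEnd ℂ) a * ζ = 1 := by linear_combination -h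
  have : ‖(starRingEnd ℂ) a * ζ‖ < 1 := by
    rw [norm_mul, RCLike.norm_conj]
    calc ‖a‖ * ‖ζ‖ ≤ 1 * ‖ζ‖ := mul_le_mul_of_nonneg_right ha.le (norm_nonneg _)
      _ < 1 := by simpa using hζ
  rw [h1] at this; simp at this

lemma my_sp (f : ℂ → ℂ) (hf : AnalyticOnNhd ℂ f (ball 0 1))
    (hmap : Set.MapsTo f (ball 0 1) (ball 0 1)) {z : ℂ} (hz : z ∈ ball (0:ℂ) 1) :
    ‖f z - f 0‖ ≤ ‖z‖ * ‖1 - (starRingEnd ℂ) (f 0) * f z‖ := by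
  have h0 : (0:ℂ) ∈ ball (0:ℂ) 1 := by simp
  have ha : ‖f 0‖ < 1 := mem_ball_zero_iff.mp (hmap h0)
  have hfb : ∀ ζ ∈ ball (0:ℂ) 1, ‖f ζ‖ < 1 := fun ζ hζ => mem_ball_zero_iff.mp (hmap hζ)
  set a := f 0 with ha0
  have hden : ∀ ζ ∈ ball (0:ℂ) 1, 1 - (starRingEnd ℂ) a * f ζ ≠ 0 :=
    fun ζ hζ => my_denom_ne a (f ζ) ha (hfb ζ hζ)
  set w : ℂ → ℂ := fun ζ => (f ζ - a) / (1 - (starRingEnd ℂ) a * f ζ) with hw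
  have hlt : ∀ ζ ∈ ball (0:ℂ) 1, ‖f ζ - a‖ < ‖1 - (starRingEnd ℂ) a * f ζ‖ := by
    intro ζ hζ
    have key := my_normSq_identity a (f ζ)
    have h1 : 0 < (1 - Complex.normSq a) * (1 - Complex.normSq (f ζ)) := by
      apply mul_pos
      · linarith [my_normSq_lt_one ha]
      · linarith [my_normSq_lt_one (hfb ζ hζ)]
    have h2 : Complex.normSq (f ζ - a) < Complex.normSq (1 - (starRingEnd ℂ) a * f ζ) := by
      linarith
    rw [← Complex.sq_norm, ← Complex.sq_norm] at h2
    exact lt_of_pow_lt_pow_left₀ 2 (norm_nonneg _) h2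
  have hdw : DifferentiableOn ℂ w (ball 0 1) := by
    apply DifferentiableOn.div
    · exact hf.differentiableOn.sub (differentiableOn_const _)
    · exact (differentiableOn_const _).sub ((differentiableOn_const _).mul hf.differentiableOn)
    · exact hden
  have hmw : Set.MapsTo w (ball (0:ℂ) 1) (ball (0:ℂ) 1) := by
    intro ζ hζ
    rw [mem_ball_zero_iff, hw]
    simp only [norm_div]
    have hpos : 0 < ‖1 - (starRingEnd ℂ) a * f ζ‖ := norm_pos_iff.mpr (hden ζ hζ)
    exact (div_lt_one hpos).mpr (hlt ζ hζ)
  have hw0 : w 0 = 0 := by simp [hw, ha0]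
  have habs : ‖w z‖ ≤ ‖z‖ := by
    apply Complex.norm_le_norm_of_mapsTo_ball hdw (hmw.mono_right ball_subset_closedBall) hw0
    simpa [mem_ball_zero_iff] using hz
  have heq : f z - a = w z * (1 - (starRingEnd ℂ) a * f z) := by
    rw [hw]
    exact (div_mul_cancel₀ _ (hden z hz)).symm
  rw [heq, norm_mul]
  exact mul_le_mul_of_nonneg_right habs (norm_nonneg _)

lemma my_int_re {u : ℝ → ℂ} (hu : IntervalIntegrable u MeasureTheory.volume 0 (2*Real.pi)) :
    (∫ θ in (0:ℝ)..(2*Real.pi), (u θ).re) = (∫ θ in (0:ℝ)..(2*Real.pi), u θ).re := by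
  have := Complex.reCLM.intervalIntegral_comp_comm hu
  simpa using this

lemma my_coeffBound (f : ℂ → ℂ) (hf : AnalyticOnNhd ℂ f (ball 0 1))
    (hmap : Set.MapsTo f (ball 0 1) (ball 0 1)) {s : ℝ} (hs0 : 0 < s) (hs1 : s < 1) (N : ℕ) :
    ∑ n ∈ Finset.range N,
        Complex.normSq (iteratedDeriv (n+1) f 0 / ((n+1).factorial : ℂ)) * (s^2)^(n+1)
      ≤ s^2 * (1 - Complex.normSq (f 0))^2 / (1 - Complex.normSq (f 0) * s^2) := by
  set a₀ := f 0 with ha₀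
  set c : ℕ → ℂ := fun n => iteratedDeriv n f 0 / (n.factorial : ℂ) with hc
  set F : ℝ → ℂ := fun θ => f (circleMap 0 s θ) with hF
  set g : ℝ → ℂ := fun θ => F θ - a₀ with hg
  set d : ℕ → ℂ := fun n => c (n+1) * ((s:ℂ)^(n+1)) with hd
  set P : ℝ → ℂ := fun θ => ∑ n ∈ range N, d n * Complex.exp (((n:ℂ)+1) * θ * Complex.I) with hP
  have hmem : ∀ θ : ℝ, circleMap 0 s θ ∈ ball (0:ℂ) 1 := by
    intro θ
    rw [mem_ball_zero_iff]
    have : ‖circleMap 0 s θ‖ = |s| := norm_circleMap_zero s θ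
    rw [this, abs_of_pos hs0]; exact hs1
  have hFc : Continuous F := by
    exact hf.continuousOn.comp_continuous (continuous_circleMap 0 s) hmem
  have hgc : Continuous g := hFc.sub continuous_const
  have hexpc : ∀ w : ℂ, Continuous fun θ : ℝ => Complex.exp (w * θ * Complex.I) := by
    intro w
    exact Complex.continuous_exp.comp (by continuity)
  have hPc : Continuous P := by
    apply continuous_finset_sum
    intro n _
    exact continuous_const.mul (hexpc _)
  -- integrability helper
  have hII : ∀ u : ℝ → ℂ, Continuous u → IntervalIntegrable u MeasureTheory.volume 0 (2*Real.pi) :=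
    fun u hu => hu.intervalIntegrable 0 (2*Real.pi)
  have hII' : ∀ u : ℝ → ℝ, Continuous u → IntervalIntegrable u MeasureTheory.volume 0 (2*Real.pi) :=
    fun u hu => hu.intervalIntegrable 0 (2*Real.pi)
  -- keyint reformulated
  have hkey : ∀ n : ℕ, (∫ θ in (0:ℝ)..(2*Real.pi), F θ * Complex.exp (-(n:ℂ) * θ * Complex.I))
      = 2 * (Real.pi:ℂ) * c n * (s:ℂ)^n := my_keyint f hf hs0 hs1
  have hmean : (∫ θ in (0:ℝ)..(2*Real.pi), F θ) = 2 * (Real.pi:ℂ) * a₀ := by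
    have := hkey 0
    simpa [hc, iteratedDeriv_zero] using this
  have hg0 : (∫ θ in (0:ℝ)..(2*Real.pi), g θ) = 0 := by
    rw [hg]
    rw [intervalIntegral.integral_sub (hII F hFc) (hII _ continuous_const)]
    rw [hmean, intervalIntegral.integral_const]
    rw [sub_eq_zero]
    rw [sub_zero, Complex.real_smul]
    push_cast
    ring
  have horth : ∀ k : ℤ, k ≠ 0 → (∫ θ in (0:ℝ)..(2*Real.pi),
      Complex.exp ((k:ℂ) * θ * Complex.I)) = 0 := fun k hk => my_integral_exp_int hk
  have hgn : ∀ n : ℕ, (∫ θ in (0:ℝ)..(2*Real.pi), g θ * Complex.exp (-((n:ℂ)+1) * θ * Complex.I))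
      = 2 * (Real.pi:ℂ) * d n := by
    intro n
    rw [hg]
    have h1 : ∀ θ:ℝ, (F θ - a₀) * Complex.exp (-((n:ℂ)+1) * θ * Complex.I)
        = F θ * Complex.exp (-((n:ℂ)+1) * θ * Complex.I)
          - a₀ * Complex.exp (-((n:ℂ)+1) * θ * Complex.I) := fun θ => by ring
    simp only [h1]
    rw [intervalIntegral.integral_sub (hII (fun θ => F θ * Complex.exp (-((n:ℂ)+1) * θ * Complex.I)) (hFc.mul (hexpc _))) (hII (fun θ => a₀ * Complex.exp (-((n:ℂ)+1) * θ * Complex.I)) (continuous_const.mul (hexpc _)))]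
    have h2 : (∫ θ in (0:ℝ)..(2*Real.pi), F θ * Complex.exp (-((n:ℂ)+1) * θ * Complex.I))
        = 2 * (Real.pi:ℂ) * c (n+1) * (s:ℂ)^(n+1) := by
      have := hkey (n+1)
      push_cast at this ⊢
      convert this using 3
    have h3 : (∫ θ in (0:ℝ)..(2*Real.pi), a₀ * Complex.exp (-((n:ℂ)+1) * θ * Complex.I)) = 0 := by
      rw [intervalIntegral.integral_const_mul]
      have := horth (-((n:ℤ)+1)) (by omega)
      push_cast at this
      rw [this, mul_zero]
    rw [h2, h3, hd]
    ring
  -- cross term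
  have hconjP : ∀ θ:ℝ, (starRingEnd ℂ) (P θ)
      = ∑ n ∈ range N, (starRingEnd ℂ) (d n) * Complex.exp (-((n:ℂ)+1) * θ * Complex.I) := by
    intro θ
    rw [hP, map_sum]
    apply Finset.sum_congr rfl
    intro n _
    rw [map_mul]
    congr 1
    rw [← Complex.exp_conj]
    congr 1
    simp only [map_mul, map_add, Complex.conj_I, Complex.conj_ofReal, Complex.conj_natCast, map_one]
    ring
  have hcross : (∫ θ in (0:ℝ)..(2*Real.pi), g θ * (starRingEnd ℂ) (P θ))
      = 2 * (Real.pi:ℂ) * ∑ n ∈ range N, (Complex.normSq (d n) : ℂ) := by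
    have h1 : ∀ θ:ℝ, g θ * (starRingEnd ℂ) (P θ)
        = ∑ n ∈ range N, (starRingEnd ℂ) (d n) * (g θ * Complex.exp (-((n:ℂ)+1) * θ * Complex.I)) := by
      intro θ
      rw [hconjP, Finset.mul_sum]
      apply Finset.sum_congr rfl
      intro n _
      ring
    simp only [h1]
    rw [intervalIntegral.integral_finset_sum]
    · rw [Finset.mul_sum]
      apply Finset.sum_congr rfl
      intro n _
      rw [intervalIntegral.integral_const_mul, hgn n]
      rw [show (starRingEnd ℂ) (d n) * (2 * (Real.pi:ℂ) * d n)
        = 2 * (Real.pi:ℂ) * (d n * (starRingEnd ℂ) (d n)) from by ring, Complex.mul_conj]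
    · intro n _
      exact hII _ (continuous_const.mul (hgc.mul (hexpc _)))
  -- ∫ P * conj P
  have horthNM : ∀ n m : ℕ, (∫ θ in (0:ℝ)..(2*Real.pi),
      Complex.exp (((n:ℂ) - (m:ℂ)) * θ * Complex.I))
      = if n = m then ((2*Real.pi:ℝ):ℂ) else 0 := by
    intro n m
    by_cases h : n = m
    · subst h
      simp only [sub_self, zero_mul, Complex.exp_zero, if_pos rfl]
      rw [intervalIntegral.integral_const]
      simp [Complex.real_smul]
    · rw [if_neg h]
      have hk : ((n:ℤ) - m) ≠ 0 := sub_ne_zero.mpr (by exact_mod_cast h)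
      have := horth _ hk
      push_cast at this
      exact this
  have hprod : ∀ θ:ℝ, P θ * (starRingEnd ℂ) (P θ) = ∑ n ∈ range N, ∑ m ∈ range N,
      (d n * (starRingEnd ℂ) (d m)) * Complex.exp (((n:ℂ) - (m:ℂ)) * θ * Complex.I) := by
    intro θ
    rw [hconjP, hP, Finset.sum_mul_sum]
    apply Finset.sum_congr rfl; intro n _
    apply Finset.sum_congr rfl; intro m _
    rw [mul_mul_mul_comm, ← Complex.exp_add]
    congr 2
    ring
  have hPP : (∫ θ in (0:ℝ)..(2*Real.pi), P θ * (starRingEnd ℂ) (P θ))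
      = 2 * (Real.pi:ℂ) * ∑ n ∈ range N, (Complex.normSq (d n) : ℂ) := by
    simp only [hprod]
    rw [intervalIntegral.integral_finset_sum]
    · have hin : ∀ n ∈ range N, (∫ θ in (0:ℝ)..(2*Real.pi), ∑ m ∈ range N,
          (d n * (starRingEnd ℂ) (d m)) * Complex.exp (((n:ℂ) - (m:ℂ)) * θ * Complex.I))
          = 2 * (Real.pi:ℂ) * (Complex.normSq (d n) : ℂ) := by
        intro n hn
        rw [intervalIntegral.integral_finset_sum]
        · have : ∀ m ∈ range N, (∫ θ in (0:ℝ)..(2*Real.pi),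
              (d n * (starRingEnd ℂ) (d m)) * Complex.exp (((n:ℂ) - (m:ℂ)) * θ * Complex.I))
              = if n = m then (d n * (starRingEnd ℂ) (d m)) * ((2*Real.pi:ℝ):ℂ) else 0 := by
            intro m _
            rw [intervalIntegral.integral_const_mul, horthNM n m]
            split
            · rfl
            · rw [mul_zero]
          rw [Finset.sum_congr rfl this, Finset.sum_ite_eq (range N) n
            (fun m => (d n * (starRingEnd ℂ) (d m)) * ((2*Real.pi:ℝ):ℂ)), if_pos hn]
          rw [Complex.mul_conj]
          push_cast
          ring
        · intro m _
          exact hII _ (continuous_const.mul (hexpc _))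
      rw [Finset.sum_congr rfl hin, ← Finset.mul_sum]
    · intro n _
      apply hII
      apply continuous_finset_sum
      intro m _
      exact continuous_const.mul (hexpc _)
  -- Bessel
  set A : ℝ := ∫ θ in (0:ℝ)..(2*Real.pi), Complex.normSq (g θ) with hA
  have hgcN : Continuous fun θ => Complex.normSq (g θ) := Complex.continuous_normSq.comp hgc
  have hPcN : Continuous fun θ => Complex.normSq (P θ) := Complex.continuous_normSq.comp hPc
  have hgP : Continuous fun θ => g θ * (starRingEnd ℂ) (P θ) :=
    hgc.mul (Complex.continuous_conj.comp hPc)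
  have hPPc : Continuous fun θ => P θ * (starRingEnd ℂ) (P θ) :=
    hPc.mul (Complex.continuous_conj.comp hPc)
  have hIcross : (∫ θ in (0:ℝ)..(2*Real.pi), (g θ * (starRingEnd ℂ) (P θ)).re)
      = 2*Real.pi * ∑ n ∈ range N, Complex.normSq (d n) := by
    rw [my_int_re (hII _ hgP), hcross]
    have : (2 * (Real.pi:ℂ)) * ∑ n ∈ range N, (Complex.normSq (d n) : ℂ)
        = (((2*Real.pi * ∑ n ∈ range N, Complex.normSq (d n)) : ℝ) : ℂ) := by
      push_cast; ring
    rw [this, Complex.ofReal_re]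
  have hIPP : (∫ θ in (0:ℝ)..(2*Real.pi), Complex.normSq (P θ))
      = 2*Real.pi * ∑ n ∈ range N, Complex.normSq (d n) := by
    have h1 : ∀ θ:ℝ, Complex.normSq (P θ) = (P θ * (starRingEnd ℂ) (P θ)).re := by
      intro θ; rw [Complex.mul_conj, Complex.ofReal_re]
    simp only [h1]
    rw [my_int_re (hII _ hPPc), hPP]
    have : (2 * (Real.pi:ℂ)) * ∑ n ∈ range N, (Complex.normSq (d n) : ℂ)
        = (((2*Real.pi * ∑ n ∈ range N, Complex.normSq (d n)) : ℝ) : ℂ) := by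
      push_cast; ring
    rw [this, Complex.ofReal_re]
  have hBess : 2*Real.pi * ∑ n ∈ range N, Complex.normSq (d n) ≤ A := by
    have h0 : 0 ≤ ∫ θ in (0:ℝ)..(2*Real.pi), Complex.normSq (g θ - P θ) := by
      apply intervalIntegral.integral_nonneg Real.two_pi_pos.le
      intro u _
      exact Complex.normSq_nonneg _
    have hexpand : ∀ θ:ℝ, Complex.normSq (g θ - P θ)
        = Complex.normSq (g θ) - 2*((g θ * (starRingEnd ℂ) (P θ)).re) + Complex.normSq (P θ) := by
      intro θ; rw [Complex.normSq_sub]; ring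
    have hcR : Continuous fun θ:ℝ => (g θ * (starRingEnd ℂ) (P θ)).re :=
      Complex.continuous_re.comp hgP
    have h2R : Continuous fun θ:ℝ => 2 * (g θ * (starRingEnd ℂ) (P θ)).re :=
      continuous_const.mul hcR
    rw [intervalIntegral.integral_congr (fun θ _ => hexpand θ)] at h0
    rw [intervalIntegral.integral_add ((hII' _ hgcN).sub (hII' _ h2R)) (hII' _ hPcN)] at h0
    rw [intervalIntegral.integral_sub (hII' _ hgcN) (hII' _ h2R)] at h0
    rw [intervalIntegral.integral_const_mul, hIcross, hIPP] at h0
    rw [← hA] at h0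
    linarith
  -- Schwarz-Pick integral step
  set nq : ℝ := Complex.normSq a₀ with hnq
  set B : ℝ := ∫ θ in (0:ℝ)..(2*Real.pi), Complex.normSq (1 - (starRingEnd ℂ) a₀ * F θ) with hB'
  have hnorms : ∀ θ:ℝ, ‖circleMap 0 s θ‖ = s := by
    intro θ
    have : ‖circleMap 0 s θ‖ = |s| := norm_circleMap_zero s θ
    rw [this, abs_of_pos hs0]
  have hdenc : Continuous fun θ:ℝ => 1 - (starRingEnd ℂ) a₀ * F θ :=
    continuous_const.sub (continuous_const.mul hFc)
  have hdencN : Continuous fun θ:ℝ => Complex.normSq (1 - (starRingEnd ℂ) a₀ * F θ) :=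
    Complex.continuous_normSq.comp hdenc
  have hSP : A ≤ s^2 * B := by
    have hpt : ∀ θ:ℝ, Complex.normSq (g θ)
        ≤ s^2 * Complex.normSq (1 - (starRingEnd ℂ) a₀ * F θ) := by
      intro θ
      have h1 := my_sp f hf hmap (hmem θ)
      rw [hnorms θ] at h1
      have h2 := pow_le_pow_left₀ (norm_nonneg _) h1 2
      rw [mul_pow] at h2
      rw [← Complex.sq_norm, ← Complex.sq_norm]
      exact h2
    rw [hA, hB', ← intervalIntegral.integral_const_mul]
    apply intervalIntegral.integral_mono_on Real.two_pi_pos.le (hII' _ hgcN)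
      (hII' _ (continuous_const.mul hdencN))
    intro θ _
    exact hpt θ
  -- compute B
  have hIB : B = 2*Real.pi * (1 - nq)^2 + nq * A := by
    have hpt : ∀ θ:ℝ, (1 - (starRingEnd ℂ) a₀ * F θ)
        = (((1 - nq : ℝ)):ℂ) - (starRingEnd ℂ) a₀ * g θ := by
      intro θ
      rw [hg]
      have hmc : a₀ * (starRingEnd ℂ) a₀ = (nq:ℂ) := Complex.mul_conj a₀
      push_cast
      linear_combination -hmc
    have hexp2 : ∀ θ:ℝ, Complex.normSq (1 - (starRingEnd ℂ) a₀ * F θ)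
        = (1-nq)^2 + nq * Complex.normSq (g θ)
          - 2 * ((1-nq) * ((starRingEnd ℂ) a₀ * g θ).re) := by
      intro θ
      rw [hpt θ, Complex.normSq_sub]
      have e1 : Complex.normSq (((1 - nq : ℝ)):ℂ) = (1-nq)^2 := by
        rw [Complex.normSq_ofReal]; ring
      have e2 : Complex.normSq ((starRingEnd ℂ) a₀ * g θ) = nq * Complex.normSq (g θ) := by
        rw [Complex.normSq_mul, Complex.normSq_conj]
      have e3 : ((((1 - nq : ℝ)):ℂ) * (starRingEnd ℂ) ((starRingEnd ℂ) a₀ * g θ)).re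
          = (1-nq) * ((starRingEnd ℂ) a₀ * g θ).re := by
        simp [Complex.mul_re, Complex.conj_re, Complex.conj_im, Complex.ofReal_re,
          Complex.ofReal_im]
      rw [e1, e2, e3]
    have hgre : Continuous fun θ:ℝ => ((starRingEnd ℂ) a₀ * g θ).re :=
      Complex.continuous_re.comp (continuous_const.mul hgc)
    have hint3 : (∫ θ in (0:ℝ)..(2*Real.pi), ((starRingEnd ℂ) a₀ * g θ).re) = 0 := by
      rw [my_int_re (hII (fun θ => (starRingEnd ℂ) a₀ * g θ) (continuous_const.mul hgc)), intervalIntegral.integral_const_mul,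
        hg0, mul_zero, Complex.zero_re]
    rw [hB', intervalIntegral.integral_congr (fun θ _ => hexp2 θ)]
    have hc1 : Continuous fun θ:ℝ => (1-nq)^2 + nq * Complex.normSq (g θ) :=
      continuous_const.add (continuous_const.mul hgcN)
    have hc2 : Continuous fun θ:ℝ => 2 * ((1-nq) * ((starRingEnd ℂ) a₀ * g θ).re) :=
      continuous_const.mul (continuous_const.mul hgre)
    rw [intervalIntegral.integral_sub (hII' _ hc1) (hII' _ hc2)]
    rw [intervalIntegral.integral_add (hII' (fun _ => (1-nq)^2) continuous_const) (hII' (fun θ => nq * Complex.normSq (g θ)) (continuous_const.mul hgcN))]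
    rw [intervalIntegral.integral_const, intervalIntegral.integral_const_mul,
      intervalIntegral.integral_const_mul, intervalIntegral.integral_const_mul, hint3, ← hA]
    simp
  -- conclusion
  have ha1 : ‖a₀‖ < 1 := mem_ball_zero_iff.mp (hmap (by simp))
  have hnq1 : nq < 1 := my_normSq_lt_one ha1
  have hnq0 : 0 ≤ nq := Complex.normSq_nonneg _
  have hs2 : s^2 ≤ 1 := by nlinarith
  have hposd : 0 < 1 - nq * s^2 := by nlinarith
  have hAle : A * (1 - nq*s^2) ≤ 2*Real.pi * s^2 * (1-nq)^2 := by nlinarith [hSP, hIB]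
  have hsum0 : 0 ≤ ∑ n ∈ range N, Complex.normSq (d n) :=
    Finset.sum_nonneg fun n _ => Complex.normSq_nonneg _
  have final : ∑ n ∈ range N, Complex.normSq (d n) ≤ s^2 * (1-nq)^2 / (1 - nq*s^2) := by
    rw [le_div_iff₀ hposd]
    nlinarith [Real.pi_pos, hBess, hAle, hsum0]
  have hdn : ∀ n : ℕ, Complex.normSq (d n) = Complex.normSq (c (n+1)) * (s^2)^(n+1) := by
    intro n
    rw [hd]
    rw [Complex.normSq_mul, ← Complex.ofReal_pow, Complex.normSq_ofReal]
    ring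
  calc ∑ n ∈ range N, Complex.normSq (c (n+1)) * (s^2)^(n+1)
      = ∑ n ∈ range N, Complex.normSq (d n) := by
        exact (Finset.sum_congr rfl fun n _ => (hdn n).symm)
    _ ≤ s^2 * (1-nq)^2 / (1 - nq*s^2) := final

lemma my_coeffBound' (f : ℂ → ℂ) (hf : AnalyticOnNhd ℂ f (ball 0 1))
    (hmap : Set.MapsTo f (ball 0 1) (ball 0 1)) {s : ℝ} (hs0 : 0 < s) (hs1 : s ≤ 1) (N : ℕ) :
    ∑ n ∈ Finset.range N,
        Complex.normSq (iteratedDeriv (n+1) f 0 / ((n+1).factorial : ℂ)) * (s^2)^(n+1)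
      ≤ s^2 * (1 - Complex.normSq (f 0))^2 / (1 - Complex.normSq (f 0) * s^2) := by
  rcases lt_or_eq_of_le hs1 with h | h
  · exact my_coeffBound f hf hmap hs0 h N
  · subst h
    set nq := Complex.normSq (f 0) with hnq
    have hnq1 : nq < 1 := my_normSq_lt_one (mem_ball_zero_iff.mp (hmap (by simp)))
    have hnq0 : 0 ≤ nq := Complex.normSq_nonneg _
    set q : ℕ → ℝ := fun n => Complex.normSq (iteratedDeriv (n+1) f 0 / ((n+1).factorial : ℂ))
      with hq
    have hL : Filter.Tendsto (fun t : ℝ => ∑ n ∈ Finset.range N, q n * (t^2)^(n+1))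
        (nhdsWithin 1 (Set.Iio 1)) (nhds (∑ n ∈ Finset.range N, q n * ((1:ℝ)^2)^(n+1))) := by
      apply Filter.Tendsto.mono_left _ nhdsWithin_le_nhds
      apply Continuous.tendsto
      continuity
    have hR : Filter.Tendsto (fun t : ℝ => t^2 * (1 - nq)^2 / (1 - nq * t^2))
        (nhdsWithin 1 (Set.Iio 1)) (nhds ((1:ℝ)^2 * (1 - nq)^2 / (1 - nq * (1:ℝ)^2))) := by
      apply Filter.Tendsto.mono_left _ nhdsWithin_le_nhds
      apply ContinuousAt.tendsto
      apply ContinuousAt.div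
      · fun_prop
      · fun_prop
      · simp only [one_pow, mul_one]
        linarith
    have hev : ∀ᶠ t in nhdsWithin (1:ℝ) (Set.Iio 1),
        (∑ n ∈ Finset.range N, q n * (t^2)^(n+1))
          ≤ t^2 * (1 - nq)^2 / (1 - nq * t^2) := by
      filter_upwards [Ioo_mem_nhdsLT (show (0:ℝ) < 1 by norm_num)] with t ht
      exact my_coeffBound f hf hmap ht.1 ht.2 N
    exact le_of_tendsto_of_tendsto hL hR hev

lemma my_claimC (f : ℂ → ℂ) (hf : AnalyticOnNhd ℂ f (ball 0 1))
    (hmap : Set.MapsTo f (ball 0 1) (ball 0 1)) {r : ℝ} (hr0 : 0 ≤ r) (hra : r ≤ ‖f 0‖)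
    (N : ℕ) :
    ∑ n ∈ Finset.range N, ‖iteratedDeriv (n+1) f 0 / ((n+1).factorial : ℂ)‖ * r^(n+1)
      ≤ r * (1 - ‖f 0‖^2) / (1 - ‖f 0‖ * r) := by
  set a : ℝ := ‖f 0‖ with haDef
  have ha1 : a < 1 := mem_ball_zero_iff.mp (hmap (by simp))
  have hnqa : Complex.normSq (f 0) = a^2 := by
    simp only [Complex.normSq_eq_norm_sq, haDef]
  rcases eq_or_lt_of_le hr0 with h0 | hrpos
  · rw [← h0]
    simp
  have ha0 : 0 < a := lt_of_lt_of_le hrpos hra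
  have har : a * r < 1 := by nlinarith
  have hden : 0 < 1 - a * r := by linarith
  set s : ℝ := Real.sqrt (r / a) with hsDef
  have hra' : 0 < r / a := div_pos hrpos ha0
  have hs0 : 0 < s := Real.sqrt_pos.mpr hra'
  have hs2 : s^2 = r / a := Real.sq_sqrt hra'.le
  have hs1 : s ≤ 1 := by
    rw [show (1:ℝ) = Real.sqrt 1 from (Real.sqrt_one).symm]
    apply Real.sqrt_le_sqrt
    rw [div_le_one ha0]
    exact hra
  set c : ℕ → ℝ := fun n => ‖iteratedDeriv (n+1) f 0 / ((n+1).factorial : ℂ)‖ with hcDef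
  have hcs : ∀ n : ℕ, Complex.normSq (iteratedDeriv (n+1) f 0 / ((n+1).factorial : ℂ))
      = c n ^ 2 := fun n => by simp only [Complex.normSq_eq_norm_sq, hcDef]
  -- Cauchy-Schwarz
  have hCS := Finset.sum_mul_sq_le_sq_mul_sq (Finset.range N)
    (fun n => c n * s^(n+1)) (fun n => (r/s)^(n+1))
  have hxy : ∀ n ∈ Finset.range N, (c n * s^(n+1)) * ((r/s)^(n+1)) = c n * r^(n+1) := by
    intro n _
    rw [mul_assoc, ← mul_pow, mul_div_cancel₀ _ hs0.ne']
  rw [Finset.sum_congr rfl hxy] at hCS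
  have hx2 : ∀ n ∈ Finset.range N, (c n * s^(n+1))^2 = c n^2 * (s^2)^(n+1) := by
    intro n _
    rw [mul_pow, ← pow_mul, ← pow_mul, mul_comm (n+1) 2]
  have hy2 : ∀ n ∈ Finset.range N, ((r/s)^(n+1))^2 = (a*r)^(n+1) := by
    intro n _
    rw [← pow_mul, mul_comm (n+1) 2, pow_mul, div_pow, hs2]
    congr 1
    field_simp
  rw [Finset.sum_congr rfl hx2, Finset.sum_congr rfl hy2] at hCS
  -- bound the two factors
  have hbound1 : ∑ n ∈ Finset.range N, c n^2 * (s^2)^(n+1)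
      ≤ s^2 * (1 - a^2)^2 / (1 - a^2 * s^2) := by
    have := my_coeffBound' f hf hmap hs0 hs1 N
    rw [hnqa] at this
    calc ∑ n ∈ Finset.range N, c n^2 * (s^2)^(n+1)
        = ∑ n ∈ Finset.range N,
            Complex.normSq (iteratedDeriv (n+1) f 0 / ((n+1).factorial : ℂ)) * (s^2)^(n+1) := by
          exact Finset.sum_congr rfl fun n _ => by rw [hcs n]
      _ ≤ _ := this
  have hbound2 : ∑ n ∈ Finset.range N, (a*r)^(n+1) ≤ (a*r) * (1 - a*r)⁻¹ := by
    have har0 : 0 ≤ a * r := by positivity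
    have hgeo : ∑ n ∈ Finset.range N, (a*r)^n ≤ (1 - a*r)⁻¹ := by
      calc ∑ n ∈ Finset.range N, (a*r)^n ≤ ∑' n : ℕ, (a*r)^n :=
            Summable.sum_le_tsum _ (fun n _ => pow_nonneg har0 n)
              (summable_geometric_of_lt_one har0 har)
        _ = (1 - a*r)⁻¹ := tsum_geometric_of_lt_one har0 har
    calc ∑ n ∈ Finset.range N, (a*r)^(n+1) = (a*r) * ∑ n ∈ Finset.range N, (a*r)^n := by
          rw [Finset.mul_sum]
          exact Finset.sum_congr rfl fun n _ => by ring
      _ ≤ (a*r) * (1 - a*r)⁻¹ := by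
          apply mul_le_mul_of_nonneg_left hgeo har0
  -- combine
  have h1a2 : 0 < 1 - a^2 := by nlinarith
  have haas : a^2 * s^2 = a * r := by
    rw [hs2]; field_simp
  have hden2 : 0 < 1 - a^2 * s^2 := by rw [haas]; exact hden
  have hfin : (∑ n ∈ Finset.range N, c n * r^(n+1))^2 ≤ (r * (1 - a^2) / (1 - a*r))^2 := by
    have h1 : 0 ≤ ∑ n ∈ Finset.range N, (a*r)^(n+1) :=
      Finset.sum_nonneg fun n _ => pow_nonneg (by positivity) _
    have h2 : 0 ≤ ∑ n ∈ Finset.range N, c n^2 * (s^2)^(n+1) :=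
      Finset.sum_nonneg fun n _ => by positivity
    have heq : (s^2 * (1 - a^2)^2 / (1 - a^2 * s^2)) * ((a*r) * (1 - a*r)⁻¹)
        = (r * (1 - a^2) / (1 - a*r))^2 := by
      rw [hs2]
      have : a^2 * (r/a) = a * r := by field_simp
      rw [this]
      field_simp
    calc (∑ n ∈ Finset.range N, c n * r^(n+1))^2
        ≤ (∑ n ∈ Finset.range N, c n^2 * (s^2)^(n+1)) * (∑ n ∈ Finset.range N, (a*r)^(n+1)) :=
          hCS
      _ ≤ (s^2 * (1 - a^2)^2 / (1 - a^2 * s^2)) * ((a*r) * (1 - a*r)⁻¹) := by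
          apply mul_le_mul hbound1 hbound2 h1
          exact div_nonneg (by positivity) hden2.le
      _ = _ := heq
  have hLHS0 : 0 ≤ ∑ n ∈ Finset.range N, c n * r^(n+1) :=
    Finset.sum_nonneg fun n _ => by positivity
  have hRHS0 : 0 ≤ r * (1 - a^2) / (1 - a*r) := by
    apply div_nonneg _ hden.le
    exact mul_nonneg hr0 h1a2.le
  calc ∑ n ∈ Finset.range N, c n * r^(n+1)
      = ∑ n ∈ Finset.range N, c n * r^(n+1) := rfl
    _ ≤ r * (1 - a^2) / (1 - a*r) := by
        nlinarith [hfin, hLHS0, hRHS0]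

/-- Bombieri's inequality: for an analytic self-map `f` of the unit disk,
`M_f(r) - |a₀| ≤ r(1 - |a₀|²)/(1 - |a₀| r)` for `0 ≤ r ≤ |a₀|`,
where `a₀ = f 0`. -/
theorem bombieri_inequality (f : ℂ → ℂ)
    (hf : AnalyticOnNhd ℂ f (ball 0 1))
    (hmap : Set.MapsTo f (ball 0 1) (ball 0 1)) :
    ∀ r : ℝ, 0 ≤ r → r ≤ ‖f 0‖ →
      majorant f r - ‖f 0‖ ≤ r * (1 - ‖f 0‖ ^ 2) / (1 - ‖f 0‖ * r) := by
  intro r hr0 hra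
  set u : ℕ → ℝ := fun n => ‖iteratedDeriv n f 0 / (n.factorial : ℂ)‖ * r ^ n with hu
  have hu0 : u 0 = ‖f 0‖ := by
    simp [hu, iteratedDeriv_zero]
  have hunn : ∀ n, 0 ≤ u n := fun n => by
    apply mul_nonneg (norm_nonneg _) (pow_nonneg hr0 n)
  set R : ℝ := r * (1 - ‖f 0‖^2) / (1 - ‖f 0‖ * r) with hR
  have ha1 : ‖f 0‖ < 1 := mem_ball_zero_iff.mp (hmap (by simp))
  have hden : 0 < 1 - ‖f 0‖ * r := by nlinarith
  have hR0 : 0 ≤ R := by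
    apply div_nonneg _ hden.le
    have : 0 ≤ 1 - ‖f 0‖^2 := by nlinarith [norm_nonneg (f 0)]
    exact mul_nonneg hr0 this
  have hpart : ∀ N : ℕ, ∑ n ∈ Finset.range N, u (n+1) ≤ R :=
    fun N => my_claimC f hf hmap hr0 hra N
  have hbound : ∀ N : ℕ, ∑ n ∈ Finset.range N, u n ≤ ‖f 0‖ + R := by
    intro N
    cases N with
    | zero => simp; positivity
    | succ M =>
      rw [Finset.sum_range_succ']
      rw [hu0]
      have := hpart M
      linarith
  have hsumm : Summable u := summable_of_sum_range_le hunn hbound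
  have hmaj : majorant f r = u 0 + ∑' n, u (n+1) := by
    rw [majorant, ← Summable.tsum_eq_zero_add hsumm]
  have htail : ∑' n, u (n+1) ≤ R :=
    Real.tsum_le_of_sum_range_le (fun n => hunn (n+1)) hpart
  rw [hmaj, hu0]
  linarith
end

section
/- The polynomial ψ₁(x) = x⁴ + 2x² + 2x − 1 is strictly increasing on (0,1) and has a unique root ã in (0,1), which satisfies ã < 2√3 − 3. Moreover, for x ∈ (0,1), setting r_x = (√((1+x)² + x²) − (1+x))/x², one has r_x ≤ x if and only if ψ₁(x) ≥ 0, i.e. if and only if x ≥ ã. -/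
open Metric

/-!
`ψ₁` is a sum of increasing functions on `[0, ∞)`, negative at `0` and positive at `1`, so it has
exactly one root `ã` in `(0, 1)`, and `ψ₁ (2√3 - 3) > 0` places `ã` below `2√3 - 3`. Clearing
the denominator `x²` and squaring, `r_x ≤ x` becomes `(1 + x)² + x² ≤ (x³ + 1 + x)²`, which
is `x² ψ₁(x) ≥ 0`.
-/

def psiOne (x : ℝ) : ℝ := x ^ 4 + 2 * x ^ 2 + 2 * x - 1

lemma psiOne_strictMonoOn : StrictMonoOn psiOne (Set.Ici 0) := by
  intro x (hx : 0 ≤ x) y (hy : 0 ≤ y) hxy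
  have hfactor : psiOne y - psiOne x =
      (y - x) * ((y + x) * (y ^ 2 + x ^ 2) + 2 * (y + x) + 2) := by
    unfold psiOne; ring
  have hpos : 0 < (y - x) * ((y + x) * (y ^ 2 + x ^ 2) + 2 * (y + x) + 2) :=
    mul_pos (sub_pos.mpr hxy) (by positivity)
  linarith

lemma exists_psiOne_eq_zero : ∃ a ∈ Set.Ioo (0 : ℝ) 1, psiOne a = 0 := by
  have hcont : ContinuousOn psiOne (Set.Icc 0 1) := by
    unfold psiOne; fun_prop
  have hsign : (0 : ℝ) ∈ Set.Ioo (psiOne 0) (psiOne 1) := by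
    norm_num [psiOne]
  exact intermediate_value_Ioo zero_le_one hcont hsign

lemma psiOne_two_mul_sqrt_three_sub_three_pos : 0 < psiOne (2 * √3 - 3) := by
  have hsq : √3 ^ 2 = 3 := Real.sq_sqrt (by norm_num)
  unfold psiOne
  nlinarith

lemma two_mul_sqrt_three_sub_three_mem_Ioo : 2 * √3 - 3 ∈ Set.Ioo (0 : ℝ) 1 := by
  have hsq : √3 ^ 2 = 3 := Real.sq_sqrt (by norm_num)
  have hnonneg : 0 ≤ √3 := Real.sqrt_nonneg 3
  constructor <;> nlinarith

lemma sqrt_sub_div_sq_le_self_iff {x : ℝ} (hx : 0 < x) :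
    (√((1 + x) ^ 2 + x ^ 2) - (1 + x)) / x ^ 2 ≤ x ↔ 0 ≤ psiOne x := by
  have hsquare : (x * x ^ 2 + (1 + x)) ^ 2 - ((1 + x) ^ 2 + x ^ 2) = x ^ 2 * psiOne x := by
    unfold psiOne; ring
  rw [div_le_iff₀ (by positivity), sub_le_iff_le_add, Real.sqrt_le_left (by positivity),
    ← sub_nonneg, hsquare]
  exact mul_nonneg_iff_of_pos_left (by positivity)

/-- The polynomial `ψ₁(x) = x⁴ + 2x² + 2x - 1` is strictly increasing on
`(0,1)`, has a unique root `ã` in `(0,1)` with `ã < 2√3 - 3`, and for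
`x ∈ (0,1)`, `r_x ≤ x ↔ ψ₁(x) ≥ 0 ↔ x ≥ ã`, where
`r_x = (√((1+x)² + x²) - (1+x))/x²`. -/
theorem psi_one_root_properties :
    StrictMonoOn (fun x : ℝ => x ^ 4 + 2 * x ^ 2 + 2 * x - 1) (Set.Ioo 0 1) ∧
    ∃ a ∈ Set.Ioo (0 : ℝ) 1,
      a ^ 4 + 2 * a ^ 2 + 2 * a - 1 = 0 ∧
      (∀ x ∈ Set.Ioo (0 : ℝ) 1, x ^ 4 + 2 * x ^ 2 + 2 * x - 1 = 0 → x = a) ∧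
      a < 2 * Real.sqrt 3 - 3 ∧
      ∀ x ∈ Set.Ioo (0 : ℝ) 1,
        ((Real.sqrt ((1 + x) ^ 2 + x ^ 2) - (1 + x)) / x ^ 2 ≤ x ↔
            0 ≤ x ^ 4 + 2 * x ^ 2 + 2 * x - 1) ∧
        (0 ≤ x ^ 4 + 2 * x ^ 2 + 2 * x - 1 ↔ a ≤ x) := by
  have hmono : StrictMonoOn psiOne (Set.Ioo 0 1) :=
    psiOne_strictMonoOn.mono fun _ hx => hx.1.le
  obtain ⟨a, ha, hroot⟩ := exists_psiOne_eq_zero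
  refine ⟨hmono, a, ha, hroot, fun x hx hx0 => hmono.injOn hx ha (hx0.trans hroot.symm), ?_,
    fun x hx => ⟨sqrt_sub_div_sq_le_self_iff hx.1, ?_⟩⟩
  · rw [← hmono.lt_iff_lt ha two_mul_sqrt_three_sub_three_mem_Ioo, hroot]
    exact psiOne_two_mul_sqrt_three_sub_three_pos
  · rw [← hmono.le_iff_le ha hx, hroot]
    rfl
end

section
/- Let δ > 0 and R₂ ≥ 2δ, and set A = (R₂ − δ)/R₂ and B = (2R₂ − δ)δ/R₂. Let f(z) = z + ∑_{n=2}^∞ a_n z^n be analytic on the open unit disk D and subordinate to Bz/(1 − Az); every convex function of bounded type f ∈ CV(R₁, R₂) with δ = d(0, ∂f(D)) has this form. Then M_f(r) ≤ δ for all 0 ≤ r ≤ R₂/(3R₂ − 2δ). -/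
open Metric

/-!
Write `f = F ∘ φ` with `F w = B w / (1 - A w)` and `φ` a self-map of the disk fixing `0`.
On the circle `|z| = ρ < 1` Schwarz's lemma gives `|φ z| ≤ ρ`, whence `|f z|² ≤ Re G z` for
`G = C (1 + A φ) / (1 - A φ)` with `C = B² ρ² / (1 - A² ρ²)`. Averaging over the circle
(Bessel's inequality on the left, the mean value property on the right) gives
`∑ |aₙ|² ρ²ⁿ ≤ C`, and Cauchy–Schwarz with `ρ² = r / A` turns this into
`M_f(r) ≤ B r / (1 - A r)` for `r < A`, then for `r ≤ A` by continuity. Finally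
`B r / (1 - A r) ≤ δ` exactly when `r ≤ δ / (B + A δ) = R₂ / (3R₂ - 2δ)`.
-/

open Complex ComplexConjugate Finset Real

section CircleAverage

variable {f : ℂ → ℂ} {ρ : ℝ}

theorem circleAverage_div_pow_eq (hρ : 0 < ρ) (hf : DifferentiableOn ℂ f (closedBall 0 ρ))
    (n : ℕ) :
    circleAverage (fun z ↦ f z / z ^ n) 0 ρ = iteratedDeriv n f 0 / n.factorial := by
  have h := hf.circleIntegral_one_div_sub_center_pow_smul hρ n
  rw [circleAverage_eq_circleIntegral hρ.ne']
  simp only [sub_zero, smul_eq_mul] at h ⊢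
  rw [show (fun z : ℂ ↦ z⁻¹ * (f z / z ^ n)) = fun z ↦ 1 / z ^ (n + 1) * f z by
    funext z; ring, h]
  field_simp [two_pi_I_ne_zero]

theorem Complex.conj_eq_norm_sq_div (z : ℂ) : conj z = (‖z‖ ^ 2 : ℝ) / z := by
  rcases eq_or_ne z 0 with rfl | hz
  · simp
  · rw [eq_div_iff hz, mul_comm, mul_conj, normSq_eq_norm_sq]

theorem circleAverage_mul_conj_pow_eq (hρ : 0 < ρ) (hf : DifferentiableOn ℂ f (closedBall 0 ρ))
    (n : ℕ) :
    circleAverage (fun z ↦ f z * conj z ^ n) 0 ρ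
      = (ρ : ℂ) ^ (2 * n) * (iteratedDeriv n f 0 / n.factorial) := by
  rw [← circleAverage_div_pow_eq hρ hf, ← smul_eq_mul, ← circleAverage_fun_smul]
  refine circleAverage_congr_sphere fun z hz ↦ ?_
  rw [mem_sphere_zero_iff_norm] at hz
  rw [conj_eq_norm_sq_div, hz, sq_abs, smul_eq_mul, div_pow, pow_mul]
  push_cast
  ring

theorem circleAverage_re {g : ℂ → ℂ} {c : ℂ} {R : ℝ} (hg : CircleIntegrable g c R) :
    circleAverage (fun z ↦ (g z).re) c R = (circleAverage g c R).re :=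
  reCLM.circleAverage_comp_comm hg

theorem circleAverage_mul_conj_sum_eq (hρ : 0 < ρ) (hf : DifferentiableOn ℂ f (closedBall 0 ρ))
    (c : ℕ → ℂ) (K : ℕ) :
    circleAverage (fun z ↦ f z * conj (∑ n ∈ range K, c n * z ^ n)) 0 ρ
      = ∑ n ∈ range K,
          conj (c n) * (ρ : ℂ) ^ (2 * n) * (iteratedDeriv n f 0 / n.factorial) := by
  have hfc : ContinuousOn f (sphere 0 ρ) := hf.continuousOn.mono sphere_subset_closedBall
  simp only [map_sum, map_mul, map_pow, Finset.mul_sum]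
  rw [circleAverage_fun_sum fun n _ ↦ ContinuousOn.circleIntegrable hρ.le (by fun_prop)]
  refine Finset.sum_congr rfl fun n _ ↦ ?_
  rw [mul_assoc, ← circleAverage_mul_conj_pow_eq hρ hf, ← smul_eq_mul,
    ← circleAverage_fun_smul]
  congr 1
  funext z
  rw [smul_eq_mul]
  ring

theorem iteratedDeriv_sum_mul_pow_div_factorial (c : ℕ → ℂ) {K m : ℕ} (hm : m < K) :
    iteratedDeriv m (fun z ↦ ∑ n ∈ range K, c n * z ^ n) 0 / m.factorial = c m := by
  rw [iteratedDeriv_fun_sum fun n _ ↦ by fun_prop]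
  simp only [iteratedDeriv_const_mul_field, iteratedDeriv_fun_pow_zero, Nat.cast_ite,
    Nat.cast_zero, mul_ite, mul_zero]
  rw [Finset.sum_ite_eq, if_pos (mem_range.mpr hm)]
  field_simp [Nat.factorial_ne_zero]

theorem sum_norm_sq_mul_pow_le_circleAverage (hρ : 0 < ρ)
    (hf : DifferentiableOn ℂ f (closedBall 0 ρ)) (K : ℕ) :
    ∑ n ∈ range K, ‖iteratedDeriv n f 0 / n.factorial‖ ^ 2 * ρ ^ (2 * n)
      ≤ circleAverage (fun z ↦ ‖f z‖ ^ 2) 0 ρ := by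
  set a : ℕ → ℂ := fun n ↦ iteratedDeriv n f 0 / n.factorial
  set P : ℂ → ℂ := fun z ↦ ∑ n ∈ range K, a n * z ^ n
  set S := ∑ n ∈ range K, ‖a n‖ ^ 2 * ρ ^ (2 * n)
  have hpair : ∀ g : ℂ → ℂ, DifferentiableOn ℂ g (closedBall 0 ρ) →
      (∀ n < K, iteratedDeriv n g 0 / n.factorial = a n) →
      (circleAverage (fun z ↦ g z * conj (P z)) 0 ρ).re = S := by
    intro g hg hcoeff
    rw [circleAverage_mul_conj_sum_eq hρ hg, re_sum]
    refine Finset.sum_congr rfl fun n hn ↦ ?_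
    rw [hcoeff n (mem_range.mp hn), mul_right_comm, conj_mul']
    norm_cast
  have hfP := hpair f hf fun _ _ ↦ rfl
  have hPP := hpair P (by fun_prop : Differentiable ℂ P).differentiableOn
    fun _ hn ↦ iteratedDeriv_sum_mul_pow_div_factorial a hn
  have hfc : ContinuousOn f (sphere 0 |ρ|) := by
    rw [abs_of_pos hρ]; exact hf.continuousOn.mono sphere_subset_closedBall
  have hexpand : ∀ z, ‖f z - P z‖ ^ 2
      = ‖f z‖ ^ 2 - (2 : ℝ) • (f z * conj (P z)).re + (P z * conj (P z)).re := by
    intro z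
    simp only [smul_eq_mul, ← normSq_eq_norm_sq, normSq_apply, mul_re, conj_re, conj_im, sub_re,
      sub_im]
    ring
  -- Bessel's inequality: `0 ≤ avg |f - P|² = avg |f|² - S` for the Taylor polynomial `P`
  have hnonneg : 0 ≤ circleAverage (fun z ↦ ‖f z - P z‖ ^ 2) 0 ρ :=
    circleAverage_nonneg_of_nonneg fun _ _ ↦ sq_nonneg _
  simp only [hexpand] at hnonneg
  have hint {E : Type} [NormedAddCommGroup E] {g : ℂ → E}
      (hg : ContinuousOn g (sphere 0 |ρ|)) : CircleIntegrable g 0 ρ := hg.circleIntegrable'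
  rw [circleAverage_fun_add (hint (by fun_prop)) (hint (by fun_prop)),
    circleAverage_fun_sub (hint (by fun_prop)) (hint (by fun_prop)), circleAverage_fun_smul,
    smul_eq_mul, circleAverage_re (hint (by fun_prop)), circleAverage_re (hint (by fun_prop)),
    hfP, hPP] at hnonneg
  linarith

end CircleAverage

theorem sq_sum_mul_pow_le {c : ℕ → ℝ} {C ρ s : ℝ} (hc0 : c 0 = 0) (hρ : 0 < ρ)
    (hs : 0 ≤ s) (hsρ : s < ρ) (hC : ∀ K, ∑ n ∈ range K, c n ^ 2 * ρ ^ (2 * n) ≤ C)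
    (K : ℕ) :
    (∑ n ∈ range K, c n * s ^ n) ^ 2 ≤ C * s ^ 2 / (ρ ^ 2 - s ^ 2) := by
  have hq1 : (s / ρ) ^ 2 < 1 := by
    rw [div_pow, div_lt_one (by positivity)]
    exact pow_lt_pow_left₀ hsρ hs two_ne_zero
  have hIco : Ico 1 K ⊆ range K := fun n hn ↦ mem_range.mpr (mem_Ico.mp hn).2
  have hsum : ∑ n ∈ range K, c n * s ^ n = ∑ n ∈ Ico 1 K, c n * ρ ^ n * (s / ρ) ^ n := by
    rw [← Finset.sum_subset hIco fun n hn hn' ↦ ?_]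
    · refine Finset.sum_congr rfl fun n _ ↦ ?_
      rw [mul_assoc, ← mul_pow, mul_div_cancel₀ _ hρ.ne']
    · obtain rfl : n = 0 := by simp_all
      simp [hc0]
  have hcoeff : ∑ n ∈ Ico 1 K, (c n * ρ ^ n) ^ 2 ≤ C := by
    refine le_trans (Finset.sum_le_sum_of_subset_of_nonneg hIco fun _ _ _ ↦ sq_nonneg _) ?_
    simpa only [mul_pow, ← pow_mul, mul_comm 2] using hC K
  have hgeom : ∑ n ∈ Ico 1 K, ((s / ρ) ^ n) ^ 2 ≤ s ^ 2 / (ρ ^ 2 - s ^ 2) := by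
    have h := geom_sum_Ico_le_of_lt_one (m := 1) (n := K) (sq_nonneg _) hq1
    have hq : (s / ρ) ^ 2 / (1 - (s / ρ) ^ 2) = s ^ 2 / (ρ ^ 2 - s ^ 2) := by
      have : ρ ^ 2 - s ^ 2 ≠ 0 := by nlinarith
      rw [div_pow]
      field_simp
    rw [pow_one, hq] at h
    simpa only [pow_right_comm _ 2] using h
  calc (∑ n ∈ range K, c n * s ^ n) ^ 2
      ≤ (∑ n ∈ Ico 1 K, (c n * ρ ^ n) ^ 2) * ∑ n ∈ Ico 1 K, ((s / ρ) ^ n) ^ 2 := by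
        rw [hsum]; exact Finset.sum_mul_sq_le_sq_mul_sq _ _ _
    _ ≤ C * (s ^ 2 / (ρ ^ 2 - s ^ 2)) :=
        mul_le_mul hcoeff hgeom (Finset.sum_nonneg fun _ _ ↦ sq_nonneg _)
          (le_trans (by simp) (hC 0))
    _ = C * s ^ 2 / (ρ ^ 2 - s ^ 2) := (mul_div_assoc _ _ _).symm

theorem norm_sq_mul_div_one_sub_le_re {A B ρ : ℝ} (hA : 0 ≤ A) (hAρ : A * ρ < 1) {w : ℂ}
    (hw : ‖w‖ ≤ ρ) :
    ‖(B : ℂ) * w / (1 - A * w)‖ ^ 2 ≤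
      (((B ^ 2 * ρ ^ 2 / (1 - A ^ 2 * ρ ^ 2) : ℝ) : ℂ) * (1 + A * w) / (1 - A * w)).re := by
  set C := B ^ 2 * ρ ^ 2 / (1 - A ^ 2 * ρ ^ 2)
  have hρ : 0 ≤ ρ := (norm_nonneg w).trans hw
  have hA2ρ : 0 < 1 - A ^ 2 * ρ ^ 2 := by nlinarith [mul_nonneg hA hρ]
  have hw2 : normSq w ≤ ρ ^ 2 := by
    rw [normSq_eq_norm_sq]; exact pow_le_pow_left₀ (norm_nonneg w) hw 2
  have hden : 0 < normSq (1 - A * w) := by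
    refine normSq_pos.mpr fun h ↦ ?_
    have : ‖(A : ℂ) * w‖ = 1 := by rw [← sub_eq_zero.mp h, norm_one]
    rw [norm_mul, norm_real, Real.norm_of_nonneg hA] at this
    nlinarith [mul_le_mul_of_nonneg_left hw hA]
  have hL : ‖(B : ℂ) * w / (1 - A * w)‖ ^ 2 = B ^ 2 * normSq w / normSq (1 - A * w) := by
    rw [← normSq_eq_norm_sq, normSq_div, normSq_mul, normSq_ofReal]; ring
  have hR : ((C : ℂ) * (1 + A * w) / (1 - A * w)).re
      = C * (1 - A ^ 2 * normSq w) / normSq (1 - A * w) := by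
    simp only [div_re, mul_re, mul_im, ofReal_re, ofReal_im, add_re, add_im, one_re, one_im,
      sub_re, sub_im, normSq_apply]
    field_simp
    ring
  rw [hL, hR, div_le_div_iff_of_pos_right hden]
  have hC : C * (1 - A ^ 2 * ρ ^ 2) = B ^ 2 * ρ ^ 2 := div_mul_cancel₀ _ hA2ρ.ne'
  have key : (1 - A ^ 2 * ρ ^ 2) * (C * (1 - A ^ 2 * normSq w) - B ^ 2 * normSq w)
      = B ^ 2 * (ρ ^ 2 - normSq w) := by
    linear_combination (1 - A ^ 2 * normSq w) * hC
  have := (mul_nonneg_iff_of_pos_left hA2ρ).mp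
    (key ▸ mul_nonneg (sq_nonneg B) (sub_nonneg.mpr hw2))
  linarith

theorem sum_norm_sq_mul_pow_le_of_subordinate {f : ℂ → ℂ} {A B ρ : ℝ} (hA0 : 0 ≤ A)
    (hA1 : A ≤ 1) (hsub : Subordinate f fun z ↦ (B : ℂ) * z / (1 - A * z)) (hρ0 : 0 < ρ)
    (hρ1 : ρ < 1) (K : ℕ) :
    ∑ n ∈ range K, ‖iteratedDeriv n f 0 / n.factorial‖ ^ 2 * ρ ^ (2 * n)
      ≤ B ^ 2 * ρ ^ 2 / (1 - A ^ 2 * ρ ^ 2) := by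
  obtain ⟨φ, hφ, hφ0, hφmaps, hfφ⟩ := hsub
  set C := B ^ 2 * ρ ^ 2 / (1 - A ^ 2 * ρ ^ 2)
  set G : ℂ → ℂ := fun z ↦ (C : ℂ) * (1 + A * φ z) / (1 - A * φ z)
  have hball : closedBall (0 : ℂ) ρ ⊆ ball 0 1 := closedBall_subset_ball hρ1
  have hne : ∀ z ∈ ball (0 : ℂ) 1, 1 - (A : ℂ) * φ z ≠ 0 := by
    intro z hz h
    have : ‖(A : ℂ) * φ z‖ = 1 := by rw [← sub_eq_zero.mp h, norm_one]
    rw [norm_mul, norm_real, Real.norm_of_nonneg hA0] at this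
    nlinarith [mem_ball_zero_iff.mp (hφmaps hz), norm_nonneg (φ z)]
  have hφd := hφ.differentiableOn
  have hG : DifferentiableOn ℂ G (closedBall 0 ρ) :=
    (by fun_prop (disch := exact hne) : DifferentiableOn ℂ G (ball 0 1)).mono hball
  have hfd : DifferentiableOn ℂ f (closedBall 0 ρ) :=
    ((by fun_prop (disch := exact hne) : DifferentiableOn ℂ
      (fun z ↦ (B : ℂ) * φ z / (1 - A * φ z)) (ball 0 1)).congr hfφ).mono hball
  have hpt : ∀ z ∈ sphere (0 : ℂ) |ρ|, ‖f z‖ ^ 2 ≤ (G z).re := by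
    intro z hz
    rw [abs_of_pos hρ0, mem_sphere_zero_iff_norm] at hz
    have hz1 : ‖z‖ < 1 := hz ▸ hρ1
    have hφz : ‖φ z‖ ≤ ρ := hz ▸ Complex.norm_le_norm_of_mapsTo_ball hφd
      (hφmaps.mono_right ball_subset_closedBall) hφ0 hz1
    rw [hfφ (mem_ball_zero_iff.mpr hz1)]
    exact norm_sq_mul_div_one_sub_le_re hA0 (by nlinarith) hφz
  have hmean : circleAverage G 0 ρ = G 0 := by
    refine DiffContOnCl.circleAverage ?_
    rw [abs_of_pos hρ0]
    exact (hG.mono closure_ball_subset_closedBall).diffContOnCl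
  have hGc : ContinuousOn G (sphere 0 ρ) := hG.continuousOn.mono sphere_subset_closedBall
  have hfc : ContinuousOn f (sphere 0 ρ) := hfd.continuousOn.mono sphere_subset_closedBall
  calc ∑ n ∈ range K, ‖iteratedDeriv n f 0 / n.factorial‖ ^ 2 * ρ ^ (2 * n)
      ≤ circleAverage (fun z ↦ ‖f z‖ ^ 2) 0 ρ :=
        sum_norm_sq_mul_pow_le_circleAverage hρ0 hfd K
    _ ≤ circleAverage (fun z ↦ (G z).re) 0 ρ :=
        circleAverage_mono (ContinuousOn.circleIntegrable hρ0.le (by fun_prop))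
          (ContinuousOn.circleIntegrable hρ0.le (by fun_prop)) hpt
    _ = (G 0).re := by rw [circleAverage_re (hGc.circleIntegrable hρ0.le), hmean]
    _ = C := by simp [G, hφ0]

theorem majorant_le_of_subordinate {f : ℂ → ℂ} {A B r : ℝ} (hA0 : 0 < A) (hA1 : A < 1)
    (hB : 0 ≤ B) (hsub : Subordinate f fun z ↦ (B : ℂ) * z / (1 - A * z)) (hr0 : 0 ≤ r)
    (hrA : r ≤ A) :
    majorant f r ≤ B * r / (1 - A * r) := by
  set a : ℕ → ℝ := fun n ↦ ‖iteratedDeriv n f 0 / n.factorial‖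
  have ha0 : a 0 = 0 := by
    obtain ⟨φ, -, hφ0, -, hfφ⟩ := hsub
    simpa [a, hφ0] using hfφ (mem_ball_self one_pos)
  have hpartial :
      ∀ K, ∀ s ∈ Set.Ioo 0 A, ∑ n ∈ range K, a n * s ^ n ≤ B * s / (1 - A * s) := by
    rintro K s ⟨hs0, hsA⟩
    have hAs : 0 < 1 - A * s := by nlinarith
    -- the radius that optimises the Cauchy–Schwarz estimate
    set ρ := √(s / A)
    have hρsq : ρ ^ 2 = s / A := Real.sq_sqrt (by positivity)
    have hρ0 : 0 < ρ := Real.sqrt_pos.mpr (by positivity)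
    have hρ1 : ρ < 1 := (Real.sqrt_lt' one_pos).mpr (by rw [one_pow, div_lt_one hA0]; exact hsA)
    have hsρ : s < ρ := by
      refine lt_of_pow_lt_pow_left₀ 2 hρ0.le ?_
      rw [hρsq, lt_div_iff₀ hA0]
      nlinarith
    have hsq := sq_sum_mul_pow_le ha0 hρ0 hs0.le hsρ
      (sum_norm_sq_mul_pow_le_of_subordinate hA0.le hA1.le hsub hρ0 hρ1) K
    have hid : B ^ 2 * ρ ^ 2 / (1 - A ^ 2 * ρ ^ 2) * s ^ 2 / (ρ ^ 2 - s ^ 2)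
        = (B * s / (1 - A * s)) ^ 2 := by
      rw [hρsq]
      field_simp
    exact (abs_le_of_sq_le_sq' (hid ▸ hsq) (by positivity)).2
  have hden : ∀ s ∈ Set.Icc 0 A, 1 - A * s ≠ 0 := fun s hs ↦ by nlinarith [hs.1, hs.2]
  have hclosure :
      ∀ K, ∀ s ∈ Set.Icc 0 A, ∑ n ∈ range K, a n * s ^ n ≤ B * s / (1 - A * s) := by
    intro K
    rw [← closure_Ioo hA0.ne]
    refine le_on_closure (hpartial K) (by fun_prop) ?_
    rw [closure_Ioo hA0.ne]
    fun_prop (disch := exact hden)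
  exact Real.tsum_le_of_sum_range_le (fun n ↦ by positivity)
    fun K ↦ hclosure K r ⟨hr0, hrA⟩

theorem bohr_convex_bounded_type_general (δ R₂ : ℝ) (hδ : 0 < δ) (hR : 2 * δ ≤ R₂)
    (f : ℂ → ℂ)
    (hsub : Subordinate f (fun z : ℂ =>
      (((2 * R₂ - δ) * δ / R₂ : ℝ) : ℂ) * z /
        (1 - (((R₂ - δ) / R₂ : ℝ) : ℂ) * z))) :
    ∀ r : ℝ, 0 ≤ r → r ≤ R₂ / (3 * R₂ - 2 * δ) →
      majorant f r ≤ δ := by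
  intro r hr0 hr
  set A := (R₂ - δ) / R₂
  set B := (2 * R₂ - δ) * δ / R₂
  have hR₂ : 0 < R₂ := by linarith
  have h3 : 0 < 3 * R₂ - 2 * δ := by linarith
  have hA0 : 0 < A := div_pos (by linarith) hR₂
  have hA1 : A < 1 := (div_lt_one hR₂).mpr (by linarith)
  have hB : 0 ≤ B := div_nonneg (mul_nonneg (by linarith) hδ.le) hR₂.le
  -- `R₂ / (3R₂ - 2δ) ≤ A` amounts to `(2R₂ - δ)(R₂ - 2δ) ≥ 0`
  have hrA : r ≤ A := hr.trans (by rw [div_le_div_iff₀ h3 hR₂]; nlinarith)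
  have hAr : 0 < 1 - A * r := by nlinarith
  have hr' : r * (3 * R₂ - 2 * δ) ≤ R₂ := (le_div_iff₀ h3).mp hr
  calc majorant f r ≤ B * r / (1 - A * r) := majorant_le_of_subordinate hA0 hA1 hB hsub hr0 hrA
    _ ≤ δ := by
      rw [div_le_iff₀ hAr]
      have hBA : B + A * δ = δ * (3 * R₂ - 2 * δ) / R₂ := by
        simp only [A, B]; field_simp; ring
      have : r * (B + A * δ) ≤ δ := by
        rw [hBA, mul_div_assoc', div_le_iff₀ hR₂]; nlinarith
      linarith

/-- Bohr inequality for convex functions of bounded type: if `δ > 0`,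
`R₂ ≥ 2δ`, and `f(z) = z + ∑_{n≥2} a_n z^n` is subordinate to `Bz/(1 - Az)`
where `A = (R₂ - δ)/R₂` and `B = (2R₂ - δ)δ/R₂`, then `M_f(r) ≤ δ` for
`0 ≤ r ≤ R₂/(3R₂ - 2δ)`. -/
theorem bohr_convex_bounded_type (δ R₂ : ℝ) (hδ : 0 < δ) (hR : 2 * δ ≤ R₂)
    (f : ℂ → ℂ)
    (hf : AnalyticOnNhd ℂ f (ball 0 1))
    (h0 : f 0 = 0) (h1 : deriv f 0 = 1)
    (hsub : Subordinate f (fun z : ℂ =>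
      (((2 * R₂ - δ) * δ / R₂ : ℝ) : ℂ) * z /
        (1 - (((R₂ - δ) / R₂ : ℝ) : ℂ) * z))) :
    ∀ r : ℝ, 0 ≤ r → r ≤ R₂ / (3 * R₂ - 2 * δ) →
      majorant f r ≤ δ :=
  bohr_convex_bounded_type_general δ R₂ hδ hR f hsub
end

section
/- There is no universal Bohr radius for derivatives of analytic self-maps of the disk: for every r with 0 < r < 1 there exists an analytic function f on the open unit disk D with f(D) ⊆ D such that M_{f'}(r) > 1. (One may take f(z) = f_a(z) := (z + a)/(1 + az) with a ∈ (0,1) sufficiently small, since M_{f_a'}(r) ≤ 1 if and only if r ≤ a/(1 + √(1−a²)).) -/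
open Metric

/-- `∑ (n+1) x^n = 1/(1-x)^2` for `‖x‖ < 1`. -/
lemma aux_hasSum {𝕜 : Type*} [NormedField 𝕜] [CompleteSpace 𝕜] {x : 𝕜} (hx : ‖x‖ < 1) :
    HasSum (fun n : ℕ => ((n : 𝕜) + 1) * x ^ n) (1 / (1 - x) ^ 2) := by
  have hx1 : (1 : 𝕜) - x ≠ 0 := by
    intro h
    have : (1 : 𝕜) = x := by linear_combination h
    rw [← this] at hx; simp at hx
  have h1 := hasSum_coe_mul_geometric_of_norm_lt_one hx
  have h2 := hasSum_geometric_of_norm_lt_one hx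
  have h := h1.add h2
  convert h using 1
  · funext n; ring
  · rw [inv_eq_one_div]; field_simp; ring

/-- coefficients of the power series of the derivative of the Möbius map -/
noncomputable def mobiusCoeff (r : ℝ) (n : ℕ) : ℂ :=
  (1 - (r : ℂ) ^ 2) * ((n : ℂ) + 1) * (-(r : ℂ)) ^ n

/-- power series of the derivative of the Möbius map -/
noncomputable def mobiusSeries (r : ℝ) : FormalMultilinearSeries ℂ ℂ ℂ :=
  FormalMultilinearSeries.ofScalars ℂ (mobiusCoeff r)

lemma mobiusSeries_norm (r : ℝ) (n : ℕ) : ‖mobiusSeries r n‖ = ‖mobiusCoeff r n‖ :=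
  FormalMultilinearSeries.ofScalars_norm ℂ (mobiusCoeff r) n

lemma mobiusSeries_apply (r : ℝ) (n : ℕ) (y : ℂ) :
    (mobiusSeries r n fun _ => y) = mobiusCoeff r n * y ^ n := by
  rw [mobiusSeries, FormalMultilinearSeries.ofScalars_apply_eq, smul_eq_mul]

/-- There is no universal Bohr radius for derivatives of analytic self-maps of
the unit disk: for every `0 < r < 1` there is an analytic self-map `f` with
`M_{f'}(r) > 1`. -/
theorem no_universal_bohr_radius_for_derivatives :
    ∀ r : ℝ, 0 < r → r < 1 →
      ∃ f : ℂ → ℂ, AnalyticOnNhd ℂ f (ball 0 1) ∧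
        Set.MapsTo f (ball 0 1) (ball 0 1) ∧
        1 < majorant (deriv f) r := by
  intro r hr0 hr1
  set f : ℂ → ℂ := fun z => (z + r) / (1 + r * z) with hf_def
  -- denominator is nonzero on the unit ball
  have hden : ∀ z : ℂ, ‖z‖ < 1 → 1 + (r : ℂ) * z ≠ 0 := by
    intro z hz h
    have h1 : (r : ℂ) * z = -1 := by linear_combination h
    have h2 : ‖(r : ℂ) * z‖ = 1 := by rw [h1]; simp
    have h3 : ‖(r : ℂ) * z‖ < 1 := by
      rw [norm_mul, Complex.norm_real, Real.norm_of_nonneg hr0.le]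
      nlinarith [norm_nonneg z]
    linarith [h2 ▸ h3]
  have hmem : ∀ z : ℂ, z ∈ ball (0:ℂ) 1 ↔ ‖z‖ < 1 := by
    intro z; rw [mem_ball_zero_iff]
  -- analyticity
  have hf : AnalyticOnNhd ℂ f (ball 0 1) := by
    apply AnalyticOnNhd.div
    · exact (analyticOnNhd_id).add analyticOnNhd_const
    · exact analyticOnNhd_const.add (analyticOnNhd_const.mul analyticOnNhd_id)
    · intro z hz; exact hden z ((hmem z).1 hz)
  -- maps to
  have hmaps : Set.MapsTo f (ball 0 1) (ball 0 1) := by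
    intro z hz
    rw [hmem] at hz ⊢
    have hd := hden z hz
    have key : Complex.normSq (1 + (r:ℂ) * z) - Complex.normSq (z + r)
        = (1 - r ^ 2) * (1 - Complex.normSq z) := by
      simp only [Complex.normSq_apply, Complex.add_re, Complex.add_im, Complex.mul_re,
        Complex.mul_im, Complex.ofReal_re, Complex.ofReal_im, Complex.one_re, Complex.one_im]
      ring
    have habs : ‖z‖ < 1 := hz
    have hz2 : Complex.normSq z < 1 := by
      rw [← Complex.sq_norm]
      nlinarith [norm_nonneg z]
    have hpos : 0 < Complex.normSq (1 + (r:ℂ) * z) - Complex.normSq (z + r) := by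
      rw [key]
      exact mul_pos (by nlinarith) (by linarith)
    have hlt : ‖z + (r:ℂ)‖ < ‖1 + (r:ℂ) * z‖ := by
      have h1 : ‖z + (r:ℂ)‖ ^ 2 < ‖1 + (r:ℂ) * z‖ ^ 2 := by
        rw [Complex.sq_norm, Complex.sq_norm]
        linarith
      exact lt_of_pow_lt_pow_left₀ 2 (norm_nonneg _) h1
    rw [hf_def]
    simp only [norm_div]
    rw [div_lt_one (norm_pos_iff.mpr hd)]
    exact hlt
  -- derivative formula
  have hderiv : ∀ y : ℂ, ‖y‖ < 1 → deriv f y = (1 - (r:ℂ) ^ 2) / (1 + r * y) ^ 2 := by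
    intro y hy
    have hd := hden y hy
    have h1 : HasDerivAt (fun z : ℂ => z + (r:ℂ)) 1 y := (hasDerivAt_id y).add_const _
    have h2 : HasDerivAt (fun z : ℂ => 1 + (r:ℂ) * z) r y := by
      simpa using ((hasDerivAt_id y).const_mul (r:ℂ)).const_add 1
    have h3 := h1.div h2 hd
    rw [show f = ((fun z : ℂ => z + (r:ℂ)) / fun z : ℂ => 1 + (r:ℂ) * z) from rfl, h3.deriv]
    field_simp
    ring
  -- power series for deriv f
  have hnormc : ∀ n : ℕ, ‖mobiusCoeff r n‖ = (1 - r ^ 2) * ((n : ℝ) + 1) * r ^ n := by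
    intro n
    rw [mobiusCoeff]
    simp only [norm_mul, norm_pow, norm_neg, Complex.norm_real, Real.norm_of_nonneg hr0.le]
    congr 2
    · rw [show (1 : ℂ) - (r:ℂ)^2 = ((1 - r^2 : ℝ) : ℂ) by push_cast; ring,
        Complex.norm_real, Real.norm_of_nonneg (by nlinarith)]
    · rw [show ((n : ℂ) + 1) = ((n + 1 : ℝ) : ℂ) by push_cast; ring,
        Complex.norm_real, Real.norm_of_nonneg (by positivity)]
  -- real sum fact
  have hrealsum : HasSum (fun n : ℕ => (1 - r^2) * (((n:ℝ) + 1) * (r^2) ^ n))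
      ((1 - r^2) * (1 / (1 - r^2) ^ 2)) := by
    apply HasSum.mul_left
    apply aux_hasSum
    rw [Real.norm_of_nonneg (by positivity)]
    nlinarith
  have hsummable : Summable fun n : ℕ => ‖mobiusSeries r n‖ * ((1 : NNReal) : ℝ) ^ n := by
    simp only [NNReal.coe_one, one_pow, mul_one, mobiusSeries_norm]
    have : Summable fun n : ℕ => (1 - r^2) * (((n:ℝ) + 1) * r ^ n) := by
      apply Summable.mul_left
      apply HasSum.summable (aux_hasSum (x := r) ?_)
      rw [Real.norm_of_nonneg hr0.le]; exact hr1
    apply this.congr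
    intro n
    rw [hnormc n]; ring
  have hq : HasFPowerSeriesOnBall (deriv f) (mobiusSeries r) 0 1 := by
    constructor
    · have := (mobiusSeries r).le_radius_of_summable_norm hsummable
      simpa using this
    · norm_num
    · intro y hy
      have hy1 : ‖y‖ < 1 := by
        rw [mem_emetric_ball_zero_iff] at hy
        rw [← ofReal_norm_eq_enorm, ENNReal.ofReal_lt_one] at hy
        exact hy
      have hry : ‖-(r : ℂ) * y‖ < 1 := by
        rw [norm_mul, norm_neg, Complex.norm_real, Real.norm_of_nonneg hr0.le]
        nlinarith [norm_nonneg y]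
      have hs := (aux_hasSum hry).mul_left (1 - (r:ℂ)^2)
      rw [zero_add, hderiv y hy1]
      convert hs using 1
      · rfl
      · funext n
        rw [mobiusSeries_apply, mobiusCoeff]
        ring
      · rw [show (1 : ℂ) - (-(r:ℂ) * y) = 1 + r * y by ring]
        rw [div_eq_mul_one_div]
  -- coefficients
  have hcoef : ∀ n : ℕ, iteratedDeriv n (deriv f) 0 = (n.factorial : ℂ) * mobiusCoeff r n := by
    intro n
    have h := hq.factorial_smul (1 : ℂ) n
    rw [iteratedDeriv_eq_iteratedFDeriv, ← h, mobiusSeries_apply]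
    simp [mul_comm]
  -- the majorant
  have hmaj : majorant (deriv f) r = (1 - r^2) * (1 / (1 - r^2) ^ 2) := by
    rw [majorant, ← hrealsum.tsum_eq]
    apply tsum_congr
    intro n
    rw [hcoef n, mul_comm ((n.factorial : ℂ)) (mobiusCoeff r n), mul_div_assoc,
      div_self (by exact_mod_cast n.factorial_ne_zero), mul_one, hnormc n]
    ring
  refine ⟨f, hf, hmaps, ?_⟩
  rw [hmaj]
  have hs : 0 < 1 - r ^ 2 := by nlinarith
  have heq : (1 - r^2) * (1 / (1 - r^2) ^ 2) = 1 / (1 - r^2) := by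
    field_simp
  rw [heq, lt_div_iff₀ hs]
  nlinarith
end
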